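/- arXiv:1609.07167 — 12 statements merged into one kernel-verified Lean document; each statement's English description precedes it below -/
import Mathlib

section
/- A poset P contains a subposet isomorphic to [κ]^{<ω} (finite subsets of κ ordered by inclusion) if and only if the poset J(P) of ideals of P, ordered by inclusion, contains a subposet isomorphic to the power set 𝒫(κ) ordered by inclusion. -/
/-- Finite subsets of `α`, ordered by inclusion; `[α]^{<ω}`. -/
def FinSets (α : Type*) : Type _ := {S : Set α // S.Finite}

instance {α : Type*} : PartialOrder (FinSets α) :=
  inferInstanceAs (PartialOrder {S : Set α // S.Finite})

instance {α : Type*} : SemilatticeSup (FinSets α) :=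
  { (inferInstance : PartialOrder (FinSets α)) with
    sup := fun S T => ⟨S.1 ∪ T.1, S.2.union T.2⟩
    le_sup_left := fun S T => Set.subset_union_left (s := S.1) (t := T.1)
    le_sup_right := fun S T => Set.subset_union_right (s := S.1) (t := T.1)
    sup_le := fun _ _ _ h1 h2 => Set.union_subset h1 h2 }
/-- An ideal of a poset: a nonempty up-directed initial segment. -/
def IsIdeal {α : Type*} [Preorder α] (I : Set α) : Prop :=
  I.Nonempty ∧ (∀ ⦃x y : α⦄, x ≤ y → y ∈ I → x ∈ I) ∧
    ∀ x ∈ I, ∀ y ∈ I, ∃ z ∈ I, x ≤ z ∧ y ≤ z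

/-!
If `f` embeds `[κ]^{<ω}` into `P`, then `A ↦ ↓{f s | s ⊆ A finite}` embeds `𝒫(κ)` into `J(P)`:
the ideal of `A` contains `f {a}` exactly when `a ∈ A`.

Conversely, if `g` embeds `𝒫(κ)` into `J(P)`, pick `q a ∈ g {a} \ g {a}ᶜ`, so that
`q a ∈ g A ↔ a ∈ A`. Define `p s` for finite `s` by recursion on `⊂`, as an element of the ideal
`g s` above `q a` for `a ∈ s` and above `p t` for `t ⊂ s`. Then `p` is monotone, and
`p s ≤ p t` forces `s ⊆ t`: for `a ∈ s`, `q a ≤ p t ∈ g t`, so `q a ∈ g t` and `a ∈ t`.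
-/

section Ideal

variable {α : Type*} [Preorder α]

theorem IsIdeal.exists_upperBound_inter_finset {I : Set α} (hI : IsIdeal I) (t : Finset α) :
    ∃ z ∈ I, ∀ x ∈ t, x ∈ I → x ≤ z := by
  classical
  induction t using Finset.induction_on with
  | empty => exact hI.1.imp fun z hz => ⟨hz, by simp⟩
  | @insert a t _ ih =>
    obtain ⟨z, hzI, hz⟩ := ih
    by_cases haI : a ∈ I
    · obtain ⟨w, hwI, haw, hzw⟩ := hI.2.2 a haI z hzI
      refine ⟨w, hwI, Finset.forall_mem_insert _ _ _ |>.2 ⟨fun _ => haw, ?_⟩⟩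
      exact fun x hx hxI => (hz x hx hxI).trans hzw
    · exact ⟨z, hzI, Finset.forall_mem_insert _ _ _ |>.2 ⟨fun h => absurd h haI, hz⟩⟩

theorem isIdeal_lowerClosure {D : Set α} (hne : D.Nonempty) (hD : DirectedOn (· ≤ ·) D) :
    IsIdeal (lowerClosure D : Set α) := by
  refine ⟨hne.mono subset_lowerClosure, fun x y hxy hy => (lowerClosure D).lower hxy hy, ?_⟩
  rintro x ⟨a, haD, hxa⟩ y ⟨b, hbD, hyb⟩
  obtain ⟨c, hcD, hac, hbc⟩ := hD a haD b hbD
  exact ⟨c, subset_lowerClosure hcD, hxa.trans hac, hyb.trans hbc⟩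

noncomputable def upperBoundIn (I : {I : Set α // IsIdeal I}) (t : Finset α) : α :=
  (I.2.exists_upperBound_inter_finset t).choose

theorem upperBoundIn_mem (I : {I : Set α // IsIdeal I}) (t : Finset α) :
    upperBoundIn I t ∈ I.1 :=
  (I.2.exists_upperBound_inter_finset t).choose_spec.1

theorem le_upperBoundIn (I : {I : Set α // IsIdeal I}) {t : Finset α} {x : α} (hxt : x ∈ t)
    (hxI : x ∈ I.1) : x ≤ upperBoundIn I t :=
  (I.2.exists_upperBound_inter_finset t).choose_spec.2 x hxt hxI

end Ideal

theorem Monotone.directedOn_image_finset_subset {κ β : Type*} [Preorder β] {f : Finset κ → β}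
    (hf : Monotone f) (A : Set κ) : DirectedOn (· ≤ ·) (f '' {s | ↑s ⊆ A}) := by
  classical
  rintro _ ⟨s, hs, rfl⟩ _ ⟨t, ht, rfl⟩
  refine ⟨f (s ∪ t), ⟨s ∪ t, ?_, rfl⟩, hf Finset.subset_union_left,
    hf Finset.subset_union_right⟩
  simpa using Set.union_subset hs ht

section IdealsOfFinsetEmbedding

variable {P κ : Type*} [PartialOrder P] (f : Finset κ ↪o P)

def idealOfSet (A : Set κ) : {I : Set P // IsIdeal I} :=
  ⟨lowerClosure (f '' {s | ↑s ⊆ A}),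
    isIdeal_lowerClosure ⟨f ∅, ∅, by simp, rfl⟩ (f.monotone.directedOn_image_finset_subset A)⟩

theorem singleton_mem_idealOfSet_iff (a : κ) (A : Set κ) :
    f {a} ∈ (idealOfSet f A).1 ↔ a ∈ A := by
  constructor
  · rintro ⟨_, ⟨s, hsA, rfl⟩, hle⟩
    exact hsA (by simpa using f.le_iff_le.1 hle)
  · exact fun ha => subset_lowerClosure ⟨{a}, by simpa using ha, rfl⟩

def idealEmbedding : Set κ ↪o {I : Set P // IsIdeal I} :=
  OrderEmbedding.ofMapLEIff (idealOfSet f) fun A B =>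
    ⟨fun h a ha => (singleton_mem_idealOfSet_iff f a B).1
        (h ((singleton_mem_idealOfSet_iff f a A).2 ha)),
      fun h => lowerClosure_mono (Set.image_mono fun s hs => (hs : (s : Set κ) ⊆ A).trans h)⟩

end IdealsOfFinsetEmbedding

theorem exists_mem_iff_mem_of_setEmbedding {κ β : Type*} (g : Set κ ↪o Set β) :
    ∃ q : κ → β, ∀ a A, q a ∈ g A ↔ a ∈ A := by
  have hsep : ∀ a : κ, ∃ x ∈ g {a}, x ∉ g {a}ᶜ := fun a =>
    Set.not_subset.1 fun h => g.le_iff_le.1 h rfl rfl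
  choose q hq_mem hq_not_mem using hsep
  refine ⟨q, fun a A => ⟨fun h => ?_, fun ha => ?_⟩⟩
  · by_contra ha
    exact hq_not_mem a (g.monotone (Set.subset_compl_singleton_iff.2 ha) h)
  · exact g.monotone (Set.singleton_subset_iff.2 ha) (hq_mem a)

section FinsetEmbeddingOfIdeals

variable {P κ : Type*} [PartialOrder P] (J : Finset κ →o {I : Set P // IsIdeal I}) (q : κ → P)

open Classical in
noncomputable def idealSelection : Finset κ → P :=
  Finset.strongInduction fun s p =>
    upperBoundIn (J s)
      (s.image q ∪ s.ssubsets.attach.image fun t => p t.1 (Finset.mem_ssubsets.1 t.2))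

open Classical in
theorem idealSelection_eq (s : Finset κ) :
    idealSelection J q s =
      upperBoundIn (J s)
        (s.image q ∪ s.ssubsets.attach.image fun t => idealSelection J q t.1) := by
  rw [idealSelection, Finset.strongInduction_eq]

theorem idealSelection_mem (s : Finset κ) : idealSelection J q s ∈ (J s).1 := by
  rw [idealSelection_eq]
  exact upperBoundIn_mem _ _

theorem idealSelection_mono : Monotone (idealSelection J q) := by
  classical
  intro t s hts
  rcases hts.eq_or_ssubset with rfl | hts
  · exact le_rfl
  rw [idealSelection_eq J q s]
  have ht_mem : idealSelection J q t ∈ s.ssubsets.attach.image fun u => idealSelection J q u.1 :=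
    Finset.mem_image_of_mem _ (Finset.mem_attach _ ⟨t, Finset.mem_ssubsets.2 hts⟩)
  exact le_upperBoundIn _ (Finset.mem_union_right _ ht_mem)
    (J.monotone hts.1 (idealSelection_mem J q t))

variable {J q} (hq : ∀ a s, q a ∈ (J s).1 ↔ a ∈ s)
include hq

theorem le_idealSelection {a : κ} {s : Finset κ} (ha : a ∈ s) : q a ≤ idealSelection J q s := by
  classical
  rw [idealSelection_eq]
  exact le_upperBoundIn _ (Finset.mem_union_left _ (Finset.mem_image_of_mem q ha))
    ((hq a s).2 ha)

theorem idealSelection_le_iff {s t : Finset κ} :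
    idealSelection J q s ≤ idealSelection J q t ↔ s ⊆ t := by
  refine ⟨fun h a ha => (hq a t).1 ?_, fun h => idealSelection_mono J q h⟩
  exact (J t).2.2.1 ((le_idealSelection hq ha).trans h) (idealSelection_mem J q t)

noncomputable def finsetEmbedding : Finset κ ↪o P :=
  OrderEmbedding.ofMapLEIff (idealSelection J q) fun _ _ => idealSelection_le_iff hq

end FinsetEmbeddingOfIdeals

/-- `P` contains a subposet isomorphic to `[κ]^{<ω}` iff `J(P)` contains a
subposet isomorphic to `𝒫(κ)`. -/
theorem stmt_1 {P : Type*} [PartialOrder P] (κ : Type*) :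
    Nonempty (FinSets κ ↪o P) ↔ Nonempty (Set κ ↪o {I : Set P // IsIdeal I}) := by
  let e : FinSets κ ≃o Finset κ := OrderIso.finsetSetFinite.symm
  constructor
  · rintro ⟨f⟩
    exact ⟨idealEmbedding (e.symm.toOrderEmbedding.trans f)⟩
  · rintro ⟨g⟩
    let J : Finset κ →o {I : Set P // IsIdeal I} :=
      ⟨fun s => g s, fun s t h => g.monotone (Finset.coe_subset.2 h)⟩
    obtain ⟨q, hq⟩ := exists_mem_iff_mem_of_setEmbedding (g.trans (OrderEmbedding.subtype _))
    exact ⟨e.toOrderEmbedding.trans (finsetEmbedding (J := J) fun a s => hq a s)⟩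
end

section
/- Let Ω(ω*) be the set of pairs (i,j) with i < j < ω, ordered by (i,j) ≤ (i',j') iff i' ≤ i and j ≤ j', and let Ω̲(ω*) be Ω(ω*) with a least element adjoined. Then Ω̲(ω*) does not embed into [ω]^{<ω} (finite subsets of ℕ ordered by inclusion) as a join-subsemilattice, even though it embeds as a poset. -/
/-- The poset `Ω(ω*)`: pairs `(i,j)` with `i < j < ω`, with `(i,j) ≤ (i',j')` iff
`i' ≤ i` and `j ≤ j'`.  It is a join-semilattice with `(i,j) ⊔ (i',j') = (min i i', max j j')`. -/
def OmegaStar : Type := {p : ℕ × ℕ // p.1 < p.2}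

instance : SemilatticeSup OmegaStar where
  le a b := b.1.1 ≤ a.1.1 ∧ a.1.2 ≤ b.1.2
  le_refl a := ⟨le_refl _, le_refl _⟩
  le_trans a b c hab hbc := ⟨hbc.1.trans hab.1, hab.2.trans hbc.2⟩
  le_antisymm a b hab hba := by
    apply Subtype.ext
    exact Prod.ext (le_antisymm hba.1 hab.1) (le_antisymm hab.2 hba.2)
  sup a b := ⟨(min a.1.1 b.1.1, max a.1.2 b.1.2),
    lt_of_le_of_lt (min_le_left _ _) (lt_of_lt_of_le a.2 (le_max_left _ _))⟩
  le_sup_left a b := ⟨min_le_left _ _, le_max_left _ _⟩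
  le_sup_right a b := ⟨min_le_right _ _, le_max_right _ _⟩
  sup_le a b c hac hbc := ⟨le_min hac.1 hbc.1, max_le hac.2 hbc.2⟩
/-- `A` embeds into `B` as a join-subsemilattice: an injective map preserving binary joins. -/
def JoinEmbeds (A B : Type*) [SemilatticeSup A] [SemilatticeSup B] : Prop :=
  ∃ f : A → B, Function.Injective f ∧ ∀ x y : A, f (x ⊔ y) = f x ⊔ f y

open Filter

section ConvexSequence

variable {α : Type*} {S : ℕ → Set α}

theorem exists_mem_forall_lt_notMem
    (hconv : ∀ l m n, l ≤ m → m ≤ n → S m ⊆ S l ∪ S n)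
    (hstrict : ∀ i k, i < k → S (i + 1) ∪ S k ⊂ S i ∪ S k) {i : ℕ} (hfin : (S i).Finite) :
    ∃ y ∈ S i, ∀ n, i < n → y ∉ S n := by
  by_contra! hreturn
  have hstays : ∀ y ∈ S i \ S (i + 1), ∀ᶠ m in atTop, y ∈ S m := by
    rintro y ⟨hyi, hyi'⟩
    obtain ⟨n, hin, hyn⟩ := hreturn y hyi
    filter_upwards [eventually_ge_atTop n] with m hnm
    exact (hconv (i + 1) n m hin hnm hyn).resolve_left hyi'
  obtain ⟨k, hstay, hik⟩ :=
    ((hfin.sdiff.eventually_all.2 hstays).and (eventually_gt_atTop i)).exists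
  obtain ⟨y, hy, hy'⟩ := Set.exists_of_ssubset (hstrict i k hik)
  have hyi : y ∈ S i := hy.resolve_right fun hyk => hy' (Or.inr hyk)
  exact hy' (Or.inr (hstay y ⟨hyi, fun hyi' => hy' (Or.inl hyi')⟩))

theorem infinite_zero_of_forall_exists_mem_forall_lt_notMem
    (hconv : ∀ l m n, l ≤ m → m ≤ n → S m ⊆ S l ∪ S n)
    (hlast : ∀ i, ∃ y ∈ S i, ∀ n, i < n → y ∉ S n) : (S 0).Infinite := by
  choose Y hYmem hYnot using hlast
  have hinj : Function.Injective Y :=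
    .of_lt_imp_ne fun i j hij hY => hYnot i j hij (hY ▸ hYmem j)
  refine Set.infinite_of_injective_forall_mem hinj fun i => ?_
  exact (hconv 0 i (i + 1) i.zero_le i.le_succ (hYmem i)).resolve_right (hYnot i _ i.lt_succ_self)

theorem exists_infinite_of_convex_of_strict
    (hconv : ∀ l m n, l ≤ m → m ≤ n → S m ⊆ S l ∪ S n)
    (hstrict : ∀ i k, i < k → S (i + 1) ∪ S k ⊂ S i ∪ S k) : ∃ n, (S n).Infinite := by
  by_contra! hfin
  exact infinite_zero_of_forall_exists_mem_forall_lt_notMem hconv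
    (fun i => exists_mem_forall_lt_notMem hconv hstrict (hfin i)) (hfin 0)

end ConvexSequence

namespace OmegaStar

theorem le_def {a b : OmegaStar} : a ≤ b ↔ b.1.1 ≤ a.1.1 ∧ a.1.2 ≤ b.1.2 := Iff.rfl

def span (l n : ℕ) (h : l ≤ n) : OmegaStar := ⟨(l, n + 1), Nat.lt_succ_of_le h⟩

def atom (n : ℕ) : OmegaStar := span n n le_rfl

theorem atom_sup_atom {l n : ℕ} (h : l ≤ n) : atom l ⊔ atom n = span l n h :=
  Subtype.ext (Prod.ext (min_eq_left h) (max_eq_right (Nat.succ_le_succ h)))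

theorem atom_le_span {l m n : ℕ} (hlm : l ≤ m) (hmn : m ≤ n) (h : l ≤ n) :
    atom m ≤ span l n h :=
  le_def.2 ⟨hlm, Nat.succ_le_succ hmn⟩

theorem span_succ_lt_span {i k : ℕ} (h : i < k) : span (i + 1) k h < span i k h.le :=
  lt_of_le_of_ne (le_def.2 ⟨i.le_succ, le_rfl⟩)
    fun he => i.succ_ne_self (congrArg (·.1.1) he)

end OmegaStar

namespace JoinEmbeds

variable {A B C : Type*} [SemilatticeSup A] [SemilatticeSup B] [SemilatticeSup C]

theorem trans (hAB : JoinEmbeds A B) (hBC : JoinEmbeds B C) : JoinEmbeds A C := by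
  obtain ⟨f, hf, hfsup⟩ := hAB
  obtain ⟨g, hg, hgsup⟩ := hBC
  exact ⟨g ∘ f, hg.comp hf, fun x y => by simp only [Function.comp, hfsup, hgsup]⟩

theorem withBot : JoinEmbeds A (WithBot A) :=
  ⟨WithBot.some, WithBot.coe_injective, WithBot.coe_sup⟩

end JoinEmbeds

open OmegaStar in
theorem not_joinEmbeds_omegaStar_finSets (α : Type*) : ¬ JoinEmbeds OmegaStar (FinSets α) := by
  rintro ⟨f, hinj, hsup⟩
  have hmono : Monotone f := fun x y hxy => by
    rw [← sup_eq_right.2 hxy, hsup]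
    exact le_sup_left
  have hsup_atom : ∀ {l n} (h : l ≤ n), (f (span l n h)).1 = (f (atom l)).1 ∪ (f (atom n)).1 :=
    fun h => by rw [← atom_sup_atom h, hsup]; rfl
  obtain ⟨n, hinf⟩ := exists_infinite_of_convex_of_strict (S := fun n => (f (atom n)).1)
    (fun l m n hlm hmn => by
      rw [← hsup_atom (hlm.trans hmn)]
      exact hmono (atom_le_span hlm hmn _))
    (fun i k hik => by
      rw [← hsup_atom hik, ← hsup_atom hik.le]
      exact (hmono.strictMono_of_injective hinj) (span_succ_lt_span hik))
  exact hinf (f (atom n)).2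

def OmegaStar.toFinSets : OmegaStar ↪o FinSets ℕ :=
  OrderEmbedding.ofMapLEIff (fun a => ⟨Set.Ico a.1.1 a.1.2, Set.finite_Ico _ _⟩)
    fun a _ => Set.Ico_subset_Ico_iff a.2

def OmegaStar.withBotToFinSets : WithBot OmegaStar ↪o FinSets ℕ :=
  OrderEmbedding.ofMapLEIff (WithBot.recBotCoe ⟨∅, Set.finite_empty⟩ OmegaStar.toFinSets) <| by
    intro a b
    induction a using WithBot.recBotCoe with
    | bot => exact iff_of_true (Set.empty_subset _) bot_le
    | coe x =>
      induction b using WithBot.recBotCoe with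
      | bot =>
        refine iff_of_false (fun h => ?_) (WithBot.not_coe_le_bot x)
        exact h (Set.left_mem_Ico.2 x.2)
      | coe y => exact OmegaStar.toFinSets.le_iff_le.trans WithBot.coe_le_coe.symm

/-- `Ω̲(ω*)` does not embed into `[ω]^{<ω}` as a join-subsemilattice,
although it embeds as a poset. -/
theorem stmt_2 :
    ¬ JoinEmbeds (WithBot OmegaStar) (FinSets ℕ) ∧
      Nonempty (WithBot OmegaStar ↪o FinSets ℕ) :=
  ⟨fun h => not_joinEmbeds_omegaStar_finSets ℕ (JoinEmbeds.withBot.trans h),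
    ⟨OmegaStar.withBotToFinSets⟩⟩
end

section
/- If Q is a well-founded poset, then the join-semilattice Ω̲(ω*) does not embed as a join-subsemilattice into I_{<ω}(Q), the join-semilattice of finitely generated initial segments of Q ordered by inclusion. -/
/-- Finitely generated initial segments of `Q`, ordered by inclusion. -/
def FinGenInitSeg (Q : Type*) [Preorder Q] : Type _ :=
  {S : Set Q // ∃ F : Finset Q, S = {x | ∃ y ∈ F, x ≤ y}}

instance {Q : Type*} [Preorder Q] : PartialOrder (FinGenInitSeg Q) :=
  inferInstanceAs (PartialOrder {S : Set Q // ∃ F : Finset Q, S = {x | ∃ y ∈ F, x ≤ y}})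
instance {Q : Type*} [Preorder Q] : SemilatticeSup (FinGenInitSeg Q) :=
  { (inferInstance : PartialOrder (FinGenInitSeg Q)) with
    sup := fun S T => ⟨S.1 ∪ T.1, by
      classical
      obtain ⟨F, hF⟩ := S.2
      obtain ⟨G, hG⟩ := T.2
      refine ⟨F ∪ G, ?_⟩
      ext x
      simp only [hF, hG, Set.mem_union, Set.mem_setOf_eq, Finset.mem_union]
      constructor
      · rintro (⟨y, hy, hxy⟩ | ⟨y, hy, hxy⟩)
        · exact ⟨y, Or.inl hy, hxy⟩
        · exact ⟨y, Or.inr hy, hxy⟩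
      · rintro ⟨y, hy | hy, hxy⟩
        · exact Or.inl ⟨y, hy, hxy⟩
        · exact Or.inr ⟨y, hy, hxy⟩⟩
    le_sup_left := fun S T => Set.subset_union_left (s := S.1) (t := T.1)
    le_sup_right := fun S T => Set.subset_union_right (s := S.1) (t := T.1)
    sup_le := fun _ _ _ h1 h2 => Set.union_subset h1 h2 }
/-!
Write `v m` for the image of `(m, m + 1)`. Injectivity gives `b m ∈ v m \ v (m + 1)`, and since
`(i + 1, i + 2) ≤ (i, i + 1) ⊔ (m + 1, m + 2)` for `i < m`, every element of `v (i + 1)` above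
`b m` lies in `v i`. Climbing from `b m` through generators of `v m, v (m - 1), …, v 0` gives,
for each `m`, a finite descending chain of generators; Kőnig's lemma glues these into one
descending sequence of generators `w j` of `v j`, which is eventually constant by
well-foundedness. Its final value generates `v (m + 1)` for all large `m` and lies above some
such `b m`, a contradiction.
-/

open Filter

section Chains

variable {α : Type*} [Preorder α]

theorem exists_chain_of_forall_exists_le {A : ℕ → Set α} :
    ∀ {m : ℕ}, (A m).Nonempty → (∀ j < m, ∀ y ∈ A (j + 1), ∃ z ∈ A j, y ≤ z) →
      ∃ c : ℕ → α, (∀ j ≤ m, c j ∈ A j) ∧ ∀ j < m, c (j + 1) ≤ c j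
  | 0, ⟨y, hy⟩, _ => ⟨fun _ => y, fun j hj => by rwa [Nat.le_zero.1 hj], by simp⟩
  | m + 1, hm, hA => by
    obtain ⟨c, hcA, hc⟩ := exists_chain_of_forall_exists_le (A := fun j => A (j + 1)) hm
      fun j hj => hA (j + 1) (by omega)
    obtain ⟨z, hzA, hcz⟩ := hA 0 m.succ_pos (c 0) (hcA 0 m.zero_le)
    refine ⟨fun | 0 => z | j + 1 => c j, ?_, ?_⟩
    · rintro (_ | j) hj
      exacts [hzA, hcA j (by omega)]
    · rintro (_ | j) hj
      exacts [hcz, hc j (by omega)]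

-- Kőnig's lemma; the levels are chosen coherently by a single ultrafilter on the chain indices.
theorem exists_antitone_forall_frequently_eq (F : ℕ → Finset α) (g : ℕ → ℕ → α)
    (hgF : ∀ m, ∀ j ≤ m, g m j ∈ F j) (hg : ∀ m, ∀ j < m, g m (j + 1) ≤ g m j) :
    ∃ w : ℕ → α, Antitone w ∧ (∀ j, w j ∈ F j) ∧ ∀ j, ∃ᶠ m in atTop, g m j = w j := by
  let U : Ultrafilter ℕ := .of atTop
  have hU : ∀ j, ∀ᶠ m in (U : Filter ℕ), j ≤ m := fun j =>
    Ultrafilter.of_le atTop (eventually_ge_atTop j)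
  have hw : ∀ j, ∃ y ∈ F j, ∀ᶠ m in (U : Filter ℕ), g m j = y := fun j =>
    (Ultrafilter.eventually_exists_mem_iff (F j).finite_toSet).1 <|
      (hU j).mono fun m hm => ⟨g m j, hgF m j hm, rfl⟩
  choose w hwF hwU using hw
  refine ⟨w, antitone_nat_of_succ_le fun j => ?_, hwF, fun j =>
    (hwU j).frequently.filter_mono (Ultrafilter.of_le atTop)⟩
  obtain ⟨m, hjm, hm, hm'⟩ := ((hU (j + 1)).and ((hwU j).and (hwU (j + 1)))).exists
  exact hm ▸ hm' ▸ hg m j hjm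

end Chains

theorem Function.Injective.map_le_map_iff_of_map_sup {α β : Type*} [SemilatticeSup α]
    [SemilatticeSup β] {f : α → β} (hf : Function.Injective f)
    (hsup : ∀ a b, f (a ⊔ b) = f a ⊔ f b) {a b : α} : f a ≤ f b ↔ a ≤ b := by
  rw [← sup_eq_right, ← hsup, hf.eq_iff, sup_eq_right]

namespace OmegaStar

def mk (i j : ℕ) (h : i < j) : OmegaStar := ⟨(i, j), h⟩

theorem mk_le_mk {i j i' j' : ℕ} (h : i < j) (h' : i' < j') :
    mk i j h ≤ mk i' j' h' ↔ i' ≤ i ∧ j ≤ j' := Iff.rfl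

theorem mk_sup_mk {i j i' j' : ℕ} (h : i < j) (h' : i' < j') :
    mk i j h ⊔ mk i' j' h' =
      mk (min i i') (max j j') ((min_le_left i i').trans_lt (h.trans_le (le_max_left j j'))) :=
  rfl

end OmegaStar

namespace FinGenInitSeg

variable {α : Type*}

theorem mem_of_le_of_mem [Preorder α] {S : FinGenInitSeg α} {x y : α} (hxy : x ≤ y)
    (hy : y ∈ S.1) : x ∈ S.1 := by
  obtain ⟨F, hF⟩ := S.2
  rw [hF] at hy ⊢
  obtain ⟨z, hz, hyz⟩ := hy
  exact ⟨z, hz, hxy.trans hyz⟩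

theorem exists_mem_succ [PartialOrder α] [WellFoundedLT α] (v : ℕ → FinGenInitSeg α)
    (b : ℕ → α) (hb : ∀ m, b m ∈ (v m).1)
    (hstep : ∀ i m, i < m → ∀ x ∈ (v (i + 1)).1, b m ≤ x → x ∈ (v i).1) :
    ∃ m, b m ∈ (v (m + 1)).1 := by
  choose F hF using fun k => (v k).2
  have hchain : ∀ m, ∃ c : ℕ → α, (∀ j ≤ m, c j ∈ {y | y ∈ F j ∧ b m ≤ y}) ∧
      ∀ j < m, c (j + 1) ≤ c j := by
    intro m
    refine exists_chain_of_forall_exists_le ?_ fun j hj y ⟨hyF, hby⟩ => ?_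
    · obtain ⟨y, hyF, hby⟩ := hF m ▸ hb m
      exact ⟨y, hyF, hby⟩
    · obtain ⟨z, hzF, hyz⟩ := hF j ▸ hstep j m hj y (hF (j + 1) ▸ ⟨y, hyF, le_rfl⟩) hby
      exact ⟨z, ⟨hzF, hby.trans hyz⟩, hyz⟩
  choose g hgF hg using hchain
  obtain ⟨w, hw, hwF, hwg⟩ := exists_antitone_forall_frequently_eq F g
    (fun m j hj => (hgF m j hj).1) hg
  obtain ⟨N, hN⟩ := WellFoundedLT.antitone_chain_condition hw
  obtain ⟨m, hm, hNm⟩ := ((hwg N).and_eventually (eventually_ge_atTop N)).exists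
  refine ⟨m, hF (m + 1) ▸ ⟨w N, ?_, ?_⟩⟩
  · exact hN (m + 1) (by omega) ▸ hwF (m + 1)
  · exact hm ▸ (hgF m N hNm).2

end FinGenInitSeg

/-- if `Q` is well-founded, `Ω̲(ω*)` does not embed as a join-subsemilattice
into `I_{<ω}(Q)`. -/
theorem stmt_3 {Q : Type*} [PartialOrder Q]
    (hQ : WellFounded ((· < ·) : Q → Q → Prop)) :
    ¬ JoinEmbeds (WithBot OmegaStar) (FinGenInitSeg Q) := by
  have : WellFoundedLT Q := ⟨hQ⟩
  rintro ⟨f, hf, hf_sup⟩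
  have hf_le {a b} : f a ≤ f b ↔ a ≤ b := hf.map_le_map_iff_of_map_sup hf_sup
  let v (m : ℕ) : FinGenInitSeg Q := f (OmegaStar.mk m (m + 1) m.lt_succ_self)
  have hsep : ∀ m, ∃ b, b ∈ (v m).1 ∧ b ∉ (v (m + 1)).1 := fun m =>
    Set.not_subset.1 <| hf_le.not.2 <| by
      rw [WithBot.coe_le_coe, OmegaStar.mk_le_mk]
      omega
  choose b hb hbv using hsep
  have hcover : ∀ i m, i < m → v (i + 1) ≤ v i ⊔ v (m + 1) := by
    intro i m him
    rw [← hf_sup, ← WithBot.coe_sup, OmegaStar.mk_sup_mk, hf_le, WithBot.coe_le_coe,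
      OmegaStar.mk_le_mk]
    omega
  obtain ⟨m, hm⟩ := FinGenInitSeg.exists_mem_succ v b hb fun i m him x hx hbx =>
    (hcover i m him hx).resolve_right fun hxv => hbv m (FinGenInitSeg.mem_of_le_of_mem hbx hxv)
  exact hbv m hm
end

section
/- An algebraic lattice L is well-founded if and only if the join-semilattice K(L) of its compact elements is well-founded and contains no join-subsemilattice isomorphic to Ω̲(ω*) or to [ω]^{<ω}. -/
/-- The December 2024 Mathlib notion of compact element of a complete lattice. -/
def CompleteLattice.IsCompactElement {α : Type*} [CompleteLattice α] (k : α) :=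
  ∀ s : Set α, k ≤ sSup s → ∃ t : Finset α, ↑t ⊆ s ∧ k ≤ t.sup id

open CompleteLattice in
instance {L : Type*} [CompleteLattice L] :
    SemilatticeSup {a : L // CompleteLattice.IsCompactElement a} :=
  { (inferInstance : PartialOrder {a : L // CompleteLattice.IsCompactElement a}) with
    sup := fun a b => ⟨a.1 ⊔ b.1, by
      intro s hs
      classical
      obtain ⟨ta, hta, ha⟩ := a.2 s (le_trans le_sup_left hs)
      obtain ⟨tb, htb, hb⟩ := b.2 s (le_trans le_sup_right hs)
      refine ⟨ta ∪ tb, ?_, ?_⟩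
      · rw [Finset.coe_union]; exact Set.union_subset hta htb
      · exact sup_le (ha.trans (Finset.sup_mono Finset.subset_union_left))
          (hb.trans (Finset.sup_mono Finset.subset_union_right))⟩
    le_sup_left := fun a b => le_sup_left (a := a.1) (b := b.1)
    le_sup_right := fun a b => le_sup_right (a := a.1) (b := b.1)
    sup_le := fun _ _ _ h1 h2 => sup_le h1 h2 }

open Finset Filter

section JoinEmbedding

variable {A B : Type*} [SemilatticeSup A] [SemilatticeSup B]

theorem map_le_map_iff_of_map_sup {f : A → B} (hf : Function.Injective f)
    (hsup : ∀ x y, f (x ⊔ y) = f x ⊔ f y) {x y : A} : f x ≤ f y ↔ x ≤ y := by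
  rw [← sup_eq_right, ← hsup, hf.eq_iff, sup_eq_right]

theorem JoinEmbeds.of_map_sup_of_le (f : A → B) (hsup : ∀ x y, f (x ⊔ y) = f x ⊔ f y)
    (hle : ∀ x y, f x ≤ f y → x ≤ y) : JoinEmbeds A B :=
  ⟨f, fun x y h => le_antisymm (hle x y h.le) (hle y x h.ge), hsup⟩

theorem JoinEmbeds.withBot_s4 [OrderBot B] (f : A → B) (hsup : ∀ x y, f (x ⊔ y) = f x ⊔ f y)
    (hle : ∀ x y, f x ≤ f y → x ≤ y) (hbot : ∀ x, ¬ f x ≤ ⊥) : JoinEmbeds (WithBot A) B := by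
  refine JoinEmbeds.of_map_sup_of_le (WithBot.recBotCoe ⊥ f) ?_ ?_
  · intro x y
    induction x using WithBot.recBotCoe <;> induction y using WithBot.recBotCoe <;>
      simp [← WithBot.coe_sup, hsup]
  · intro x y h
    induction x using WithBot.recBotCoe <;> induction y using WithBot.recBotCoe <;>
      simp_all

end JoinEmbedding

instance {α : Type*} : OrderBot (FinSets α) where
  bot := ⟨∅, Set.finite_empty⟩
  bot_le S := Set.empty_subset S.1

instance {L : Type*} [CompleteLattice L] :
    OrderBot {a : L // CompleteLattice.IsCompactElement a} where
  bot := ⟨⊥, fun _ _ => ⟨∅, by simp⟩⟩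
  bot_le a := bot_le (a := a.1)

section JoinSemilattice

variable {α : Type*} [SemilatticeSup α] [OrderBot α] {y : ℕ → α}

def AvoidsLaterJoins (y : ℕ → α) : Prop :=
  ∀ n (S : Finset ℕ), (∀ m ∈ S, n < m) → ¬ y n ≤ S.sup y

def JoinIndependent {ι : Type*} (z : ι → α) : Prop :=
  ∀ i (F : Finset ι), i ∉ F → ¬ z i ≤ F.sup z

theorem AvoidsLaterJoins.comp_strictMono (hy : AvoidsLaterJoins y) {e : ℕ → ℕ}
    (he : StrictMono e) : AvoidsLaterJoins (y ∘ e) := by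
  classical
  intro n S hS hle
  refine hy (e n) (S.image e) ?_ (by rwa [sup_image])
  simpa using fun m hm => he (hS m hm)

theorem AvoidsLaterJoins.map {β : Type*} [SemilatticeSup β] [OrderBot β] {y : ℕ → β}
    (hy : AvoidsLaterJoins y) {f : β → α} (hf : Function.Injective f)
    (hsup : ∀ x y, f (x ⊔ y) = f x ⊔ f y) : AvoidsLaterJoins (f ∘ y) := by
  intro n S hS hle
  refine hy n S hS ((map_le_map_iff_of_map_sup hf hsup).1 (hle.trans ?_))
  exact Finset.sup_le fun m hm => (map_le_map_iff_of_map_sup hf hsup).2 (le_sup hm)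

theorem avoidsLaterJoins_of_lt_succ {z : ℕ → α} (hz : ∀ n, z (n + 1) < z n) :
    AvoidsLaterJoins z := by
  intro n S hS hle
  have hanti : Antitone z := antitone_nat_of_succ_le fun n => (hz n).le
  exact (hz n).not_ge (hle.trans (Finset.sup_le fun m hm => hanti (hS m hm)))

theorem avoidsLaterJoins_singleton :
    AvoidsLaterJoins (α := FinSets ℕ) fun n => ⟨{n}, Set.finite_singleton n⟩ := by
  intro n S hS hle
  have hsub : S.sup (α := FinSets ℕ) (fun m => ⟨{m}, Set.finite_singleton m⟩) ≤
      ⟨S, S.finite_toSet⟩ :=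
    Finset.sup_le fun m hm => Set.singleton_subset_iff.2 hm
  exact lt_irrefl n (hS n (hle.trans hsub rfl))

theorem avoidsLaterJoins_omegaStar :
    AvoidsLaterJoins (α := WithBot OmegaStar) fun n =>
      WithBot.some ⟨(n, n + 1), n.lt_succ_self⟩ := by
  intro n S hS hle
  let u : OmegaStar := ⟨(n + 1, n + 2 + S.sup id), by omega⟩
  have hu : S.sup (α := WithBot OmegaStar)
      (fun m => WithBot.some ⟨(m, m + 1), m.lt_succ_self⟩) ≤ u := by
    refine Finset.sup_le fun m hm => WithBot.coe_le_coe.2 ⟨hS m hm, ?_⟩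
    have : m ≤ S.sup id := le_sup (f := id) hm
    show m + 1 ≤ n + 2 + S.sup id
    omega
  exact (WithBot.coe_le_coe.1 (hle.trans hu)).1.not_gt (Nat.lt_succ_self n)

theorem JoinIndependent.joinEmbeds_finSets {ι : Type*} {z : ι → α} (hz : JoinIndependent z) :
    JoinEmbeds (FinSets ι) α := by
  classical
  refine JoinEmbeds.of_map_sup_of_le (fun S => S.2.toFinset.sup z) (fun S T => ?_) ?_
  · show (S.2.union T.2).toFinset.sup z = _
    rw [Set.Finite.toFinset_union S.2 T.2, sup_union]
  · intro S T h i hi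
    by_contra hiT
    exact hz i _ (by simpa using hiT) ((le_sup (by simpa using hi)).trans h)

def PersistentlyCovers (y : ℕ → α) (B : Finset ℕ) (k : ℕ) : Prop :=
  ∀ N, ∃ H : Finset ℕ, (∀ m ∈ H, N < m) ∧ y k ≤ B.sup y ⊔ H.sup y

theorem PersistentlyCovers.mono {B B' : Finset ℕ} {k : ℕ} (h : PersistentlyCovers y B k)
    (hB : B ⊆ B') : PersistentlyCovers y B' k := fun N =>
  let ⟨H, hH, hk⟩ := h N
  ⟨H, hH, hk.trans (sup_le_sup_right (sup_mono hB) _)⟩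

theorem exists_joinIndependent_comp (a : ℕ)
    (h : ∀ b, ∃ k, b ≤ k ∧ ¬ PersistentlyCovers y (Ico a b) k) :
    ∃ g : ℕ → ℕ, JoinIndependent (y ∘ g) := by
  simp only [PersistentlyCovers, not_forall, not_exists, not_and] at h
  choose k hbk N hN using h
  set b : ℕ → ℕ := fun r => (fun b => max (k b) (N b) + 1)^[r] a
  have hb_succ : ∀ r, b (r + 1) = max (k (b r)) (N (b r)) + 1 := fun r =>
    Function.iterate_succ_apply' _ r a
  have hkb : ∀ r, b r ≤ k (b r) ∧ k (b r) < b (r + 1) ∧ N (b r) < b (r + 1) := fun r => by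
    have := hbk (b r); rw [hb_succ]; omega
  have hb_mono : StrictMono b :=
    strictMono_nat_of_lt_succ fun r => (hkb r).1.trans_lt (hkb r).2.1
  have hb_zero : b 0 = a := rfl
  refine ⟨k ∘ b, fun r F hrF hle => hN (b r) ((F.filter (r < ·)).image (k ∘ b)) ?_ ?_⟩
  · simp only [mem_image, mem_filter]
    rintro _ ⟨s, ⟨-, hrs⟩, rfl⟩
    have := hb_mono.monotone (Nat.succ_le_of_lt hrs)
    exact (hkb r).2.2.trans_le (this.trans (hkb s).1)
  refine hle.trans (Finset.sup_le fun s hs => ?_)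
  rcases lt_trichotomy s r with hsr | rfl | hrs
  · refine le_sup_of_le_left (le_sup (f := y) (mem_Ico.2 ⟨?_, ?_⟩))
    · exact hb_zero ▸ (hb_mono.monotone (Nat.zero_le s)).trans (hkb s).1
    · exact (hkb s).2.1.trans_le (hb_mono.monotone (Nat.succ_le_of_lt hsr))
  · exact absurd hs hrF
  · exact le_sup_of_le_right
      (le_sup (f := y) (mem_image_of_mem _ (mem_filter.2 ⟨hs, hrs⟩)))

theorem exists_tail_le_of_finite (h : {k | ¬ y k ≤ (range k).sup y}.Finite) :
    ∃ k₀, ∀ m, k₀ ≤ m → y m ≤ (range k₀).sup y := by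
  obtain ⟨k₀, hk₀⟩ := h.bddAbove
  have hold : ∀ m, k₀ < m → y m ≤ (range m).sup y := fun m hm =>
    not_not.1 fun hnew => (hk₀ hnew).not_gt hm
  have hstable : ∀ m, k₀ + 1 ≤ m → (range m).sup y = (range (k₀ + 1)).sup y := by
    intro m hm
    induction m, hm using Nat.le_induction with
    | base => rfl
    | succ m hm ih => rw [range_add_one, sup_insert, sup_eq_right.2 (hold m (by omega)), ih]
  exact ⟨k₀ + 1, fun m hm => hstable m hm ▸ hold m (by omega)⟩

theorem exists_next_marker (hcov : ∀ a, ∃ b, ∀ k, b ≤ k → PersistentlyCovers y (Ico a b) k)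
    (hnew : {k | ¬ y k ≤ (range k).sup y}.Infinite) (a : ℕ) :
    ∃ v, a < v ∧ (∀ k, v ≤ k → PersistentlyCovers y (Ico a v) k) ∧ ¬ y v ≤ (range v).sup y ∧
      ∀ B ⊆ range a, ∀ x < a, PersistentlyCovers y B x →
        ∃ H ⊆ Ioo a v, y x ≤ B.sup y ⊔ H.sup y := by
  obtain ⟨b, hb⟩ := hcov a
  have hcov_v : ∀ᶠ v in atTop, ∀ k, v ≤ k → PersistentlyCovers y (Ico a v) k :=
    eventually_atTop.2
      ⟨b, fun v hv k hk => (hb k (hv.trans hk)).mono (Ico_subset_Ico_right hv)⟩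
  have hwit : ∀ᶠ v in atTop, ∀ B ∈ (range a).powerset, ∀ x ∈ range a,
      PersistentlyCovers y B x → ∃ H ⊆ Ioo a v, y x ≤ B.sup y ⊔ H.sup y := by
    refine (eventually_all_finset _).2 fun B _ => (eventually_all_finset _).2 fun x _ => ?_
    by_cases hBx : PersistentlyCovers y B x
    · obtain ⟨H, hHa, hH⟩ := hBx a
      filter_upwards [eventually_gt_atTop (H.sup id)] with v hv _
      exact ⟨H, fun m hm => mem_Ioo.2 ⟨hHa m hm, (le_sup (f := id) hm).trans_lt hv⟩, hH⟩
    · exact Eventually.of_forall fun _ h => absurd h hBx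
  obtain ⟨v, hv_new, hv_gt, hv_cov, hv_wit⟩ :=
    ((Nat.frequently_atTop_iff_infinite.2 hnew).and_eventually
      ((eventually_gt_atTop a).and (hcov_v.and hwit))).exists
  exact ⟨v, hv_gt, hv_cov, hv_new, fun B hB x hx =>
    hv_wit B (mem_powerset.2 hB) x (mem_range.2 hx)⟩

theorem exists_markers (hcov : ∀ a, ∃ b, ∀ k, b ≤ k → PersistentlyCovers y (Ico a b) k)
    (hnew : {k | ¬ y k ≤ (range k).sup y}.Infinite) :
    ∃ n : ℕ → ℕ, StrictMono n ∧ (∀ m, ¬ y (n m) ≤ (range (n m)).sup y) ∧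
      ∀ p q x, p < q → n (p + 1) ≤ x → x < n q →
        y x ≤ (Ico (n p) (n (p + 1))).sup y ⊔ (Ico (n q) (n (q + 1))).sup y := by
  choose v hv_gt hv_cov hv_new hv_wit using exists_next_marker hcov hnew
  set n : ℕ → ℕ := fun m => v^[m + 1] 0
  have hn_eq : ∀ m, n m = v (v^[m] 0) := fun m => Function.iterate_succ_apply' v m 0
  have hn_succ : ∀ m, n (m + 1) = v (n m) := fun m => hn_eq (m + 1)
  have hn_mono : StrictMono n := strictMono_nat_of_lt_succ fun m => hn_succ m ▸ hv_gt (n m)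
  refine ⟨n, hn_mono, fun m => ?_, fun p q x hpq hx hxq => ?_⟩
  · exact hn_eq m ▸ hv_new _
  have hB : Ico (n p) (n (p + 1)) ⊆ range (n q) := fun m hm =>
    mem_range.2 ((mem_Ico.1 hm).2.trans_le (hn_mono.monotone hpq))
  have hcov_p : PersistentlyCovers y (Ico (n p) (n (p + 1))) x := by
    rw [hn_succ] at hx ⊢
    exact hv_cov (n p) x hx
  obtain ⟨H, hH, hxH⟩ := hv_wit (n q) _ hB x hxq hcov_p
  refine hxH.trans (sup_le_sup_left (sup_mono (hH.trans ?_)) _)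
  rw [hn_succ]
  exact Ioo_subset_Ico_self

section Markers

variable {n : ℕ → ℕ} (hn : StrictMono n)
  (habs : ∀ p q x, p < q → n (p + 1) ≤ x → x < n q →
    y x ≤ (Ico (n p) (n (p + 1))).sup y ⊔ (Ico (n q) (n (q + 1))).sup y)
include hn

theorem sup_Ico_markers_mono {i j i' j' : ℕ} (hi : i' ≤ i) (hj : j ≤ j') :
    (Ico (n (i + 1)) (n (j + 1))).sup y ≤ (Ico (n (i' + 1)) (n (j' + 1))).sup y :=
  sup_mono (Ico_subset_Ico (hn.monotone (by omega)) (hn.monotone (by omega)))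

include habs in
theorem sup_Ico_markers_max_le {i j i' j' : ℕ} (hij : i < j) (hij' : i' < j') :
    (Ico (n (i + 1)) (n (max j j' + 1))).sup y ≤
      (Ico (n (i + 1)) (n (j + 1))).sup y ⊔ (Ico (n (i' + 1)) (n (j' + 1))).sup y := by
  refine Finset.sup_le fun x hx => ?_
  obtain ⟨hix, hxj⟩ := mem_Ico.1 hx
  rcases lt_or_ge x (n (j + 1)) with hxj₁ | hjx
  · exact le_sup_of_le_left (le_sup (mem_Ico.2 ⟨hix, hxj₁⟩))
  rcases le_or_gt (n (i' + 1)) x with hix' | hxi'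
  · have : j < max j j' := hn.lt_iff_lt.1 (hjx.trans_lt hxj) |> Nat.lt_of_succ_lt_succ
    rw [max_eq_right (by omega)] at hxj
    exact le_sup_of_le_right (le_sup (mem_Ico.2 ⟨hix', hxj⟩))
  · have hji' : j < i' := Nat.lt_of_succ_lt_succ (hn.lt_iff_lt.1 (hjx.trans_lt hxi'))
    refine (habs j (i' + 1) x (by omega) hjx hxi').trans (sup_le_sup ?_ ?_)
    · exact sup_mono (Ico_subset_Ico (hn.monotone (by omega)) le_rfl)
    · exact sup_mono (Ico_subset_Ico le_rfl (hn.monotone (by omega)))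

include habs in
theorem joinEmbeds_omegaStar_of_markers (hy : AvoidsLaterJoins y)
    (hnew : ∀ m, ¬ y (n m) ≤ (range (n m)).sup y) : JoinEmbeds (WithBot OmegaStar) α := by
  let F : OmegaStar → α := fun p => (Ico (n (p.1.1 + 1)) (n (p.1.2 + 1))).sup y
  have hF_left : ∀ p : OmegaStar, y (n (p.1.1 + 1)) ≤ F p := fun p =>
    le_sup (mem_Ico.2 ⟨le_rfl, hn (by have := p.2; omega)⟩)
  have hF_sup_le : ∀ p q : OmegaStar, p.1.1 ≤ q.1.1 → F (p ⊔ q) ≤ F p ⊔ F q := by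
    intro p q h
    show (Ico (n (min p.1.1 q.1.1 + 1)) (n (max p.1.2 q.1.2 + 1))).sup y ≤ _
    rw [min_eq_left h]
    exact sup_Ico_markers_max_le hn habs p.2 q.2
  refine JoinEmbeds.withBot_s4 F (fun p q => le_antisymm ?_ ?_) (fun p q h => ⟨?_, ?_⟩) ?_
  · rcases le_total p.1.1 q.1.1 with h | h
    · exact hF_sup_le p q h
    · rw [sup_comm p, sup_comm (F p)]
      exact hF_sup_le q p h
  · exact sup_le (sup_Ico_markers_mono hn (min_le_left _ _) (le_max_left _ _))
      (sup_Ico_markers_mono hn (min_le_right _ _) (le_max_right _ _))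
  · by_contra! hlt
    refine hy _ _ (fun m hm => ?_) ((hF_left p).trans h)
    exact (hn (Nat.succ_lt_succ hlt)).trans_le (mem_Ico.1 hm).1
  · by_contra! hlt
    refine hnew p.1.2 ((le_sup (mem_Ico.2 ⟨hn.monotone p.2, hn (Nat.lt_succ_self _)⟩)).trans
      (h.trans (sup_mono fun m hm => mem_range.2 ?_)))
    exact (mem_Ico.1 hm).2.trans_le (hn.monotone hlt)
  · intro p hp
    exact hy _ ∅ (by simp) ((hF_left p).trans hp)

end Markers

theorem AvoidsLaterJoins.exists_tail_le (hy : AvoidsLaterJoins y)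
    (hΩ : ¬ JoinEmbeds (WithBot OmegaStar) α) (hfin : ¬ JoinEmbeds (FinSets ℕ) α) :
    ∃ k₀, ∀ m, k₀ ≤ m → y m ≤ (range k₀).sup y := by
  by_cases hcov : ∀ a, ∃ b, ∀ k, b ≤ k → PersistentlyCovers y (Ico a b) k
  · by_cases hnew : {k | ¬ y k ≤ (range k).sup y}.Infinite
    · obtain ⟨n, hn, hn_new, habs⟩ := exists_markers hcov hnew
      exact (hΩ (joinEmbeds_omegaStar_of_markers hn habs hy hn_new)).elim
    · exact exists_tail_le_of_finite (Set.not_infinite.1 hnew)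
  · push Not at hcov
    obtain ⟨a, ha⟩ := hcov
    obtain ⟨g, hg⟩ := exists_joinIndependent_comp a ha
    exact (hfin hg.joinEmbeds_finSets).elim

theorem AvoidsLaterJoins.not_wellFounded (hy : AvoidsLaterJoins y)
    (hΩ : ¬ JoinEmbeds (WithBot OmegaStar) α) (hfin : ¬ JoinEmbeds (FinSets ℕ) α) :
    ¬ WellFounded ((· < ·) : α → α → Prop) := by
  intro hwf
  let V : Set α := {v | {n | y n ≤ v}.Infinite}
  have hV : V.Nonempty := by
    obtain ⟨k₀, hk₀⟩ := hy.exists_tail_le hΩ hfin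
    exact ⟨_, (Set.Ici_infinite k₀).mono hk₀⟩
  obtain ⟨v, hvV, hv_min⟩ := hwf.has_min V hV
  obtain ⟨m₀, hm₀⟩ := hvV.nonempty
  obtain ⟨e, he, hev⟩ :=
    Nat.exists_strictMono_subsequence (P := fun n => y n ≤ v ∧ m₀ < n) fun N =>
      let ⟨b, hb, hNb⟩ := hvV.exists_gt (max m₀ N)
      ⟨b, (le_max_right _ _).trans_lt hNb, hb, (le_max_left _ _).trans_lt hNb⟩
  obtain ⟨k₁, hk₁⟩ := (hy.comp_strictMono he).exists_tail_le hΩ hfin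
  have hwV : (range k₁).sup (y ∘ e) ∈ V :=
    ((Set.Ici_infinite k₁).image he.injective.injOn).mono
      (Set.image_subset_iff.2 fun m hm => hk₁ m hm)
  have hwv : (range k₁).sup (y ∘ e) = v :=
    (Finset.sup_le fun r _ => (hev r).1).eq_of_not_lt (hv_min _ hwV)
  classical
  refine hy m₀ ((range k₁).image e) (by simpa using fun r _ => (hev r).2) ?_
  rwa [sup_image, hwv]

theorem not_exists_avoidsLaterJoins_iff :
    (¬ ∃ y : ℕ → α, AvoidsLaterJoins y) ↔ WellFounded ((· < ·) : α → α → Prop) ∧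
      ¬ JoinEmbeds (WithBot OmegaStar) α ∧ ¬ JoinEmbeds (FinSets ℕ) α := by
  refine ⟨fun h => ⟨?_, ?_, ?_⟩, fun ⟨hwf, hΩ, hfin⟩ ⟨y, hy⟩ => hy.not_wellFounded hΩ hfin hwf⟩
  · exact wellFounded_iff_isEmpty_descending_chain.2
      ⟨fun ⟨z, hz⟩ => h ⟨z, avoidsLaterJoins_of_lt_succ hz⟩⟩
  · exact fun ⟨f, hf, hsup⟩ => h ⟨_, avoidsLaterJoins_omegaStar.map hf hsup⟩
  · exact fun ⟨f, hf, hsup⟩ => h ⟨_, avoidsLaterJoins_singleton.map hf hsup⟩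

end JoinSemilattice

section AlgebraicLattice

variable {L : Type*} [CompleteLattice L]

local notation "K(" L ")" => {a : L // CompleteLattice.IsCompactElement a}

theorem coe_finset_sup_compacts {ι : Type*} (S : Finset ι) (y : ι → K(L)) :
    ((S.sup y : K(L)) : L) = S.sup fun i => (y i : L) :=
  apply_sup_eq_sup_comp Subtype.val (fun _ _ => rfl) rfl

theorem not_wellFounded_of_avoidsLaterJoins_compacts {y : ℕ → K(L)}
    (hy : AvoidsLaterJoins y) : ¬ WellFounded ((· < ·) : L → L → Prop) := by
  intro hwf
  let x : ℕ → L := fun n => ⨆ m, (y (n + m) : L)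
  refine (wellFounded_iff_isEmpty_descending_chain.1 hwf).false
    ⟨x, fun n => lt_of_le_not_ge ?_ ?_⟩
  · exact iSup_le fun m => le_iSup_of_le (m + 1) (by rw [Nat.add_right_comm, add_assoc])
  · intro hle
    have hcomp : IsCompactElement (y n : L) :=
      (CompleteLattice.isCompactElement_iff_exists_le_sSup_of_le_sSup _ _).2 (y n).2
    obtain ⟨s, hs⟩ := CompleteLattice.IsCompactElement.exists_finset_of_le_iSup L hcomp _
      ((le_iSup_of_le 0 le_rfl).trans hle)
    classical
    refine hy n (s.image (n + 1 + ·)) (fun m hm => ?_) (Subtype.coe_le_coe.1 ?_)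
    · obtain ⟨i, -, rfl⟩ := mem_image.1 hm
      omega
    · rwa [coe_finset_sup_compacts, sup_image, Finset.sup_eq_iSup]

theorem exists_avoidsLaterJoins_compacts_of_not_wellFounded [IsCompactlyGenerated L]
    (h : ¬ WellFounded ((· < ·) : L → L → Prop)) : ∃ y : ℕ → K(L), AvoidsLaterJoins y := by
  obtain ⟨⟨e, he⟩⟩ := not_isEmpty_iff.1 (mt wellFounded_iff_isEmpty_descending_chain.2 h)
  have hc : ∀ n, ∃ c : L, CompleteLattice.IsCompactElement c ∧ c ≤ e n ∧ ¬ c ≤ e (n + 1) := by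
    intro n
    by_contra! hc
    refine (he n).not_ge (le_iff_compact_le_imp.2 fun c hc' hcn => hc c ?_ hcn)
    exact (CompleteLattice.isCompactElement_iff_exists_le_sSup_of_le_sSup _ _).1 hc'
  choose c hc_comp hc_le hc_not using hc
  have he_anti : Antitone e := antitone_nat_of_succ_le fun n => (he n).le
  refine ⟨fun n => ⟨c n, hc_comp n⟩, fun n S hS hle => hc_not n ?_⟩
  refine (Subtype.coe_le_coe.2 hle).trans ?_
  rw [coe_finset_sup_compacts]
  exact Finset.sup_le fun m hm => (hc_le m).trans (he_anti (hS m hm))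

theorem wellFounded_lt_iff_not_exists_avoidsLaterJoins_compacts [IsCompactlyGenerated L] :
    WellFounded ((· < ·) : L → L → Prop) ↔ ¬ ∃ y : ℕ → K(L), AvoidsLaterJoins y :=
  ⟨fun hwf ⟨_, hy⟩ => not_wellFounded_of_avoidsLaterJoins_compacts hy hwf,
    not_imp_comm.1 exists_avoidsLaterJoins_compacts_of_not_wellFounded⟩

end AlgebraicLattice

/-- an algebraic lattice `L` is well-founded iff the join-semilattice `K(L)` of
its compact elements is well-founded and contains no join-subsemilattice isomorphic to
`Ω̲(ω*)` or to `[ω]^{<ω}`. -/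
theorem stmt_4 {L : Type*} [CompleteLattice L] [IsCompactlyGenerated L] :
    WellFounded ((· < ·) : L → L → Prop) ↔
      (WellFounded
          ((· < ·) : {a : L // CompleteLattice.IsCompactElement a} →
            {a : L // CompleteLattice.IsCompactElement a} → Prop) ∧
        ¬ JoinEmbeds (WithBot OmegaStar) {a : L // CompleteLattice.IsCompactElement a} ∧
        ¬ JoinEmbeds (FinSets ℕ) {a : L // CompleteLattice.IsCompactElement a}) := by
  rw [wellFounded_lt_iff_not_exists_avoidsLaterJoins_compacts, not_exists_avoidsLaterJoins_iff]
end

section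
/- A join-semilattice P contains an infinite independent set if and only if it contains an infinite separating chain of ideals. -/
/-- A subset `X` of a join-semilattice is independent if `x ≰ ⋁ F` for every `x ∈ X` and
every nonempty finite `F ⊆ X \\ {x}`. -/
def IndepSet {P : Type*} [SemilatticeSup P] (X : Set P) : Prop :=
  ∀ x ∈ X, ∀ (F : Finset P) (hF : F.Nonempty), ↑F ⊆ X \ {x} → ¬ x ≤ F.sup' hF id
/-- The ideal generated by `{x} ∪ J` in a join-semilattice, for `J` an ideal. -/
def joinIdeal {P : Type*} [SemilatticeSup P] (x : P) (J : Set P) : Set P :=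
  {z | ∃ y ∈ J, z ≤ x ⊔ y}

/-- A nonempty chain `𝓘` of ideals is separating if for every `I ∈ 𝓘` with `I ≠ ⋃ 𝓘` and
every `x ∈ ⋃ 𝓘 \\ I` there is `J ∈ 𝓘` with `I ⊄ {x} ∨ J`. -/
def Separating {P : Type*} [SemilatticeSup P] (𝓘 : Set (Set P)) : Prop :=
  ∀ I ∈ 𝓘, I ≠ ⋃₀ 𝓘 → ∀ x ∈ ⋃₀ 𝓘, x ∉ I → ∃ J ∈ 𝓘, ¬ I ⊆ joinIdeal x J

/-
Forward direction: if `x₀, x₁, …` are distinct elements of an independent set, the ideals `Jₙ`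
generated by the tails `{xᵢ : i ≥ n}` form a strictly decreasing chain, and it is separating:
an element `a` of the union lies below the join of finitely many `xᵢ`, so for `j ≥ n` avoiding
those indices independence gives `xⱼ ∈ Jₙ` but `xⱼ ∉ {a} ∨ J_{j+1}`.

Backward direction: starting from an ideal `K₀ ∈ 𝓘` and `s₀ ∈ ⋃ 𝓘 \ K₀`, separation provides
`K_{n+1} ⊆ Kₙ` in `𝓘` and `zₙ ∈ Kₙ` with `zₙ ∉ {sₙ} ∨ K_{n+1}`; put `s_{n+1} = sₙ ⊔ zₙ`. Every
`zᵢ` with `i ≠ n` lies in the ideal `{sₙ} ∨ K_{n+1}` (below `sₙ` if `i < n`, in `K_{n+1}` if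
`i > n`), hence so does every finite join of them, while `zₙ` does not: the `zₙ` are independent.
-/

section

open Set Filter

lemma Set.Nontrivial.exists_mem_sUnion_notMem {α : Type*} {𝓘 : Set (Set α)}
    (h𝓘 : 𝓘.Nontrivial) : ∃ K ∈ 𝓘, ∃ x ∈ ⋃₀ 𝓘, x ∉ K := by
  obtain ⟨A, hA, B, hB, hAB⟩ := h𝓘
  obtain ⟨x, hx⟩ := not_forall.1 (mt Set.ext hAB)
  by_cases hxA : x ∈ A
  · exact ⟨B, hB, x, ⟨A, hA, hxA⟩, fun hxB => hx (iff_of_true hxA hxB)⟩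
  · exact ⟨A, hA, x, ⟨B, hB, not_not.1 fun hxB => hx (iff_of_false hxA hxB)⟩, hxA⟩

variable {P : Type*} [SemilatticeSup P]

lemma IsIdeal.isLowerSet {I : Set P} (hI : IsIdeal I) : IsLowerSet I :=
  fun _ _ hba ha => hI.2.1 hba ha

lemma IsIdeal.supClosed {I : Set P} (hI : IsIdeal I) : SupClosed I := by
  intro a ha b hb
  obtain ⟨c, hc, hac, hbc⟩ := hI.2.2 a ha b hb
  exact hI.isLowerSet (sup_le hac hbc) hc

lemma isIdeal_of_supClosed {I : Set P} (hne : I.Nonempty) (hlow : IsLowerSet I)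
    (hsup : SupClosed I) : IsIdeal I :=
  ⟨hne, fun _ _ hab hb => hlow hab hb,
    fun a ha b hb => ⟨a ⊔ b, hsup ha hb, le_sup_left, le_sup_right⟩⟩

lemma IndepSet.mono {X Y : Set P} (hX : IndepSet X) (hYX : Y ⊆ X) : IndepSet Y :=
  fun x hx F hF hFY => hX x (hYX hx) F hF (hFY.trans (sdiff_subset_sdiff_left hYX))

section joinIdeal

variable {a : P} {I : Set P}

lemma subset_joinIdeal : I ⊆ joinIdeal a I :=
  fun y hy => ⟨y, hy, le_sup_right⟩

lemma mem_joinIdeal_of_le (hI : I.Nonempty) {b : P} (hba : b ≤ a) : b ∈ joinIdeal a I :=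
  let ⟨y, hy⟩ := hI
  ⟨y, hy, hba.trans le_sup_left⟩

lemma isLowerSet_joinIdeal : IsLowerSet (joinIdeal a I) :=
  fun _ _ hcb ⟨y, hy, hby⟩ => ⟨y, hy, hcb.trans hby⟩

lemma IsIdeal.supClosed_joinIdeal (hI : IsIdeal I) : SupClosed (joinIdeal a I) := by
  rintro b ⟨y, hy, hby⟩ c ⟨y', hy', hcy'⟩
  refine ⟨y ⊔ y', hI.supClosed hy hy', sup_le (hby.trans ?_) (hcy'.trans ?_)⟩ <;> gcongr
  exacts [le_sup_left, le_sup_right]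

end joinIdeal

section idealSpan

def idealSpan (Y : Set P) : Set P := lowerClosure (supClosure Y)

variable {X Y Z : Set P}

lemma subset_idealSpan : Y ⊆ idealSpan Y :=
  fun y hy => ⟨y, subset_supClosure hy, le_rfl⟩

lemma idealSpan_mono (h : Y ⊆ Z) : idealSpan Y ⊆ idealSpan Z :=
  lowerClosure_mono (supClosure_mono h)

lemma isLowerSet_idealSpan : IsLowerSet (idealSpan Y) :=
  (lowerClosure (supClosure Y)).lower

lemma supClosed_idealSpan : SupClosed (idealSpan Y) := by
  rintro a ⟨w, hw, haw⟩ b ⟨w', hw', hbw'⟩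
  exact ⟨w ⊔ w', supClosed_supClosure hw hw', sup_le_sup haw hbw'⟩

lemma isIdeal_idealSpan (hY : Y.Nonempty) : IsIdeal (idealSpan Y) :=
  isIdeal_of_supClosed (hY.mono subset_idealSpan) isLowerSet_idealSpan supClosed_idealSpan

lemma exists_finset_of_mem_idealSpan {a : P} (ha : a ∈ idealSpan Y) :
    ∃ t : Finset P, ↑t ⊆ Y ∧ a ∈ idealSpan (t : Set P) := by
  obtain ⟨_, ⟨t, ht, htY, rfl⟩, hat⟩ := ha
  exact ⟨t, htY, _, finsetSup'_mem_supClosure ht fun _ => id, hat⟩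

lemma joinIdeal_idealSpan_subset {a : P} (ha : a ∈ idealSpan Z) :
    joinIdeal a (idealSpan Y) ⊆ idealSpan (Z ∪ Y) := by
  rintro b ⟨y, hy, hby⟩
  refine isLowerSet_idealSpan hby (supClosed_idealSpan ?_ ?_)
  exacts [idealSpan_mono subset_union_left ha, idealSpan_mono subset_union_right hy]

lemma IndepSet.notMem_idealSpan (hX : IndepSet X) (hYX : Y ⊆ X) {x : P} (hx : x ∈ X)
    (hxY : x ∉ Y) : x ∉ idealSpan Y := by
  rintro ⟨_, ⟨t, ht, htY, rfl⟩, hxt⟩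
  exact hX x hx t ht (fun w hw => ⟨hYX (htY hw), fun h => hxY (h ▸ htY hw)⟩) hxt

end idealSpan

section tails

variable {x : ℕ → P}

lemma mem_idealSpan_image_Ici_iff (hx : Function.Injective x) (hind : IndepSet (range x))
    {j n : ℕ} : x j ∈ idealSpan (x '' Ici n) ↔ n ≤ j := by
  refine ⟨fun hj => ?_, fun hnj => subset_idealSpan ⟨j, hnj, rfl⟩⟩
  by_contra hjn
  refine hind.notMem_idealSpan (image_subset_range _ _) (mem_range_self j) ?_ hj
  rwa [hx.mem_set_image]

lemma separating_range_idealSpan_image_Ici (hx : Function.Injective x)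
    (hind : IndepSet (range x)) : Separating (range fun n => idealSpan (x '' Ici n)) := by
  rintro _ ⟨n, rfl⟩ - a ⟨_, ⟨m, rfl⟩, ham⟩ -
  obtain ⟨t, htm, hat⟩ := exists_finset_of_mem_idealSpan ham
  have hfresh : ∀ᶠ j in atTop, x j ∉ t :=
    Nat.cofinite_eq_atTop ▸ hx.tendsto_cofinite.eventually t.eventually_cofinite_notMem
  obtain ⟨j, hjt, hnj⟩ := (hfresh.and (eventually_ge_atTop n)).exists
  refine ⟨_, ⟨j + 1, rfl⟩, fun hsub => ?_⟩
  have hxj := joinIdeal_idealSpan_subset hat <|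
    hsub <| (mem_idealSpan_image_Ici_iff hx hind).2 hnj
  refine hind.notMem_idealSpan ?_ (mem_range_self j) ?_ hxj
  · exact union_subset (htm.trans (image_subset_range _ _)) (image_subset_range _ _)
  · rintro (hjt' | hj)
    · exact hjt hjt'
    · rw [hx.mem_set_image] at hj
      exact Nat.not_succ_le_self j hj

theorem exists_infinite_separating_chain_of_indepSet {X : Set P} (hX : X.Infinite)
    (hind : IndepSet X) :
    ∃ 𝓘 : Set (Set P), 𝓘.Infinite ∧ (∀ I ∈ 𝓘, IsIdeal I) ∧
      IsChain (· ⊆ ·) 𝓘 ∧ Separating 𝓘 := by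
  let e := hX.natEmbedding
  let x : ℕ → P := fun n => e n
  have hx : Function.Injective x := Subtype.val_injective.comp e.injective
  have hindx : IndepSet (range x) := hind.mono (range_subset_iff.2 fun n => (e n).2)
  have hself (n : ℕ) : x n ∈ idealSpan (x '' Ici n) :=
    subset_idealSpan (mem_image_of_mem x self_mem_Ici)
  have hJ : Function.Injective fun n => idealSpan (x '' Ici n) := by
    intro n m (h : idealSpan (x '' Ici n) = idealSpan (x '' Ici m))
    exact le_antisymm ((mem_idealSpan_image_Ici_iff hx hindx).1 (h ▸ hself m))
      ((mem_idealSpan_image_Ici_iff hx hindx).1 (h ▸ hself n))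
  refine ⟨_, infinite_range_of_injective hJ, ?_, ?_, separating_range_idealSpan_image_Ici hx hindx⟩
  · rintro _ ⟨n, rfl⟩
    exact isIdeal_idealSpan ⟨x n, mem_image_of_mem x self_mem_Ici⟩
  · exact Antitone.isChain_range fun n m hnm =>
      idealSpan_mono (image_mono (Ici_subset_Ici.2 hnm))

end tails

section sequences

variable {K : ℕ → Set P} {s z : ℕ → P}

lemma mem_joinIdeal_of_ne (hK : ∀ n, IsIdeal (K n)) (hanti : Antitone K) (hzK : ∀ n, z n ∈ K n)
    (hs : ∀ n, s (n + 1) = s n ⊔ z n) {i n : ℕ} (hin : i ≠ n) :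
    z i ∈ joinIdeal (s n) (K (n + 1)) := by
  rcases hin.lt_or_gt with hlt | hgt
  · have hsmono : Monotone s := monotone_nat_of_le_succ fun n => (hs n).symm ▸ le_sup_left
    exact mem_joinIdeal_of_le (hK _).1 <| (hs i ▸ le_sup_right).trans (hsmono hlt)
  · exact subset_joinIdeal (hanti hgt (hzK i))

theorem infinite_indepSet_range (hK : ∀ n, IsIdeal (K n)) (hanti : Antitone K)
    (hzK : ∀ n, z n ∈ K n) (hs : ∀ n, s (n + 1) = s n ⊔ z n)
    (hz : ∀ n, z n ∉ joinIdeal (s n) (K (n + 1))) :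
    (range z).Infinite ∧ IndepSet (range z) := by
  have hmem {i n : ℕ} (hin : i ≠ n) := mem_joinIdeal_of_ne hK hanti hzK hs hin
  have hinj : Function.Injective z := by
    intro i n hzin
    by_contra hin
    exact hz n (hzin ▸ hmem hin)
  refine ⟨infinite_range_of_injective hinj, ?_⟩
  rintro _ ⟨n, rfl⟩ F hF hFz hle
  have hFmem : ∀ w ∈ F, w ∈ joinIdeal (s n) (K (n + 1)) := by
    intro w hw
    obtain ⟨⟨i, rfl⟩, hin⟩ := hFz hw
    exact hmem fun h => hin (h ▸ rfl)
  exact hz n <| isLowerSet_joinIdeal hle <| (hK _).supClosed_joinIdeal.finsetSup'_mem hF hFmem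

end sequences

section separating

variable {𝓘 : Set (Set P)}

lemma Separating.exists_step (hid : ∀ I ∈ 𝓘, IsIdeal I) (hch : IsChain (· ⊆ ·) 𝓘)
    (hsep : Separating 𝓘) {K : Set P} (hK : K ∈ 𝓘) {s : P} (hs : s ∈ ⋃₀ 𝓘) (hsK : s ∉ K) :
    ∃ J ∈ 𝓘, J ⊆ K ∧ ∃ z ∈ K, s ⊔ z ∈ ⋃₀ 𝓘 ∧ s ⊔ z ∉ J ∧ z ∉ joinIdeal s J := by
  obtain ⟨J, hJ, hKJ⟩ := hsep K hK (fun h => hsK (h ▸ hs)) s hs hsK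
  obtain ⟨z, hzK, hzJ⟩ := not_subset.1 hKJ
  have hzJ' : z ∉ J := fun h => hzJ (subset_joinIdeal h)
  have hJK : J ⊆ K := (hch.total hJ hK).resolve_right fun h => hzJ' (h hzK)
  obtain ⟨L, hL, hsL⟩ := hs
  have hKL : K ⊆ L := (hch.total hK hL).resolve_right fun h => hsK (h hsL)
  exact ⟨J, hJ, hJK, z, hzK, ⟨L, hL, (hid L hL).supClosed hsL (hKL hzK)⟩,
    fun h => hzJ' ((hid J hJ).isLowerSet le_sup_right h), hzJ⟩

theorem exists_infinite_indepSet_of_separating (hinf : 𝓘.Infinite)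
    (hid : ∀ I ∈ 𝓘, IsIdeal I) (hch : IsChain (· ⊆ ·) 𝓘) (hsep : Separating 𝓘) :
    ∃ X : Set P, X.Infinite ∧ IndepSet X := by
  let State := {p : Set P × P // p.1 ∈ 𝓘 ∧ p.2 ∈ ⋃₀ 𝓘 ∧ p.2 ∉ p.1}
  have hstep (p : State) : ∃ q : State, ∃ z ∈ p.1.1, q.1.1 ⊆ p.1.1 ∧ q.1.2 = p.1.2 ⊔ z ∧
      z ∉ joinIdeal p.1.2 q.1.1 := by
    obtain ⟨J, hJ, hJK, z, hzK, hsz, hszJ, hzJ⟩ :=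
      hsep.exists_step hid hch p.2.1 p.2.2.1 p.2.2.2
    exact ⟨⟨(J, p.1.2 ⊔ z), hJ, hsz, hszJ⟩, z, hzK, hJK, rfl, hzJ⟩
  choose next z hzK hsub hs hz using hstep
  obtain ⟨K₀, hK₀, s₀, hs₀, hs₀K₀⟩ := hinf.nontrivial.exists_mem_sUnion_notMem
  let seq (n : ℕ) : State := next^[n] ⟨(K₀, s₀), hK₀, hs₀, hs₀K₀⟩
  have hseq (n : ℕ) : seq (n + 1) = next (seq n) := Function.iterate_succ_apply' ..
  refine ⟨_, infinite_indepSet_range (K := fun n => (seq n).1.1) (s := fun n => (seq n).1.2)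
    (z := fun n => z (seq n)) (fun n => hid _ (seq n).2.1) ?_ (fun n => hzK _)
    (fun n => hseq n ▸ hs _) (fun n => hseq n ▸ hz _)⟩
  exact antitone_nat_of_succ_le fun n => hseq n ▸ hsub _

end separating

end

/-- a join-semilattice contains an infinite independent set iff it contains an
infinite separating chain of ideals. -/
theorem stmt_6 {P : Type*} [SemilatticeSup P] :
    (∃ X : Set P, X.Infinite ∧ IndepSet X) ↔
      (∃ 𝓘 : Set (Set P), 𝓘.Infinite ∧ (∀ I ∈ 𝓘, IsIdeal I) ∧
        IsChain (· ⊆ ·) 𝓘 ∧ Separating 𝓘) := by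
  constructor
  · rintro ⟨X, hX, hind⟩
    exact exists_infinite_separating_chain_of_indepSet hX hind
  · rintro ⟨𝓘, hinf, hid, hch, hsep⟩
    exact exists_infinite_indepSet_of_separating hinf hid hch hsep
end

section
/- A join-semilattice P contains either ω* (an infinite strictly decreasing sequence) or Ω(ω*) as a join-subsemilattice if and only if P contains an ω*-indexed strictly decreasing chain 𝓘 of ideals such that every infinite subchain of 𝓘 is non-separating. -/
/-!
If `g` is strictly decreasing, the principal ideals `↓g n` form the required chain; if `f` embeds
`Ω(ω*)`, so do the ideals generated by the `f (i, j)` with `i ≥ n`. In both cases there are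
`x m ∈ I m \ I (m + 1)` with `I (m + 1) ⊆ {x m} ∨ J` for every `J`, and any infinite subchain
fails to separate its later members from such an `x m`.

Conversely, non-separation of every tail `{I k | k ≥ c}` yields, along a subsequence,
`x t ∈ I t \ I (t + 1)` with `I (t + 1) ⊆ {x t} ∨ I k` for all `k ≥ t`. If for every `K` some
`I K'` lies below a single element of `I K \ I K'`, these elements form a strictly decreasing
sequence. Otherwise fix a `K` where this fails: no `I j` lies below an element of `I K \ I j`,
so by directedness one can choose `w j ∈ I j` recursively, above the earlier `w m` modulo each
`x t` but below none of the finitely many joins `x t ⊔ w (j - 1)`. Then `(i, j) ↦ x i ⊔ w j`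
embeds `Ω(ω*)` as a join-subsemilattice.
-/

open Set

section SupHom

variable {A B : Type*} [SemilatticeSup A] [SemilatticeSup B] {f : A → B}

theorem monotone_of_map_sup (hf : ∀ a b, f (a ⊔ b) = f a ⊔ f b) : Monotone f := by
  intro a b hab
  rw [← sup_eq_right.2 hab, hf]
  exact le_sup_left

theorem le_of_map_le_of_map_sup (hinj : Function.Injective f)
    (hf : ∀ a b, f (a ⊔ b) = f a ⊔ f b) {a b : A} (h : f a ≤ f b) : a ≤ b :=
  sup_eq_right.1 (hinj (by rw [hf, sup_eq_right.2 h]))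

end SupHom

theorem sUnion_image_Ici_of_antitone {ι α : Type*} [Preorder ι] {I : ι → Set α}
    (hanti : Antitone I) (c : ι) : ⋃₀ (I '' Ici c) = I c :=
  (sUnion_subset (by rintro _ ⟨k, hk, rfl⟩; exact hanti hk)).antisymm
    (subset_sUnion_of_mem ⟨c, self_mem_Ici, rfl⟩)

theorem exists_strictAnti_of_forall_subset_Iic {ι P : Type*} [Nonempty ι] [PartialOrder P]
    {I : ι → Set P} (h : ∀ K, ∃ K' b, b ∈ I K ∧ b ∉ I K' ∧ I K' ⊆ Iic b) :
    ∃ g : ℕ → P, StrictAnti g := by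
  choose next b hb hbnot hsub using h
  inhabit ι
  refine ⟨fun m => b (next^[m] default), strictAnti_nat_of_succ_lt fun m => ?_⟩
  simp only [Function.iterate_succ_apply']
  have hmem := hb (next (next^[m] default))
  exact (hsub _ hmem).lt_of_ne fun heq => hbnot _ (heq ▸ hmem)

theorem exists_seq_of_forall_exists_succ {α : Type*} {Q : ℕ → α → Prop} {R : ℕ → α → α → Prop}
    (h₀ : ∃ a, Q 0 a) (h : ∀ n a, Q n a → ∃ b, Q (n + 1) b ∧ R n a b) :
    ∃ w : ℕ → α, ∀ n, Q n (w n) ∧ R n (w n) (w (n + 1)) := by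
  obtain ⟨a₀, ha₀⟩ := h₀
  choose next hnextQ hnextR using h
  let s : (n : ℕ) → {a // Q n a} :=
    fun n => Nat.rec ⟨a₀, ha₀⟩ (fun n a => ⟨next n a a.2, hnextQ n a a.2⟩) n
  refine ⟨fun n => (s n).1, fun n => ⟨(s n).2, ?_⟩⟩
  exact hnextR n _ (s n).2

theorem isIdeal_Iic {P : Type*} [Preorder P] (a : P) : IsIdeal (Iic a) :=
  ⟨nonempty_Iic, fun _ _ hxy hy => hxy.trans hy, fun _ _ _ _ => ⟨a, le_rfl, ‹_›, ‹_›⟩⟩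

theorem IsIdeal.mem_of_le {P : Type*} [Preorder P] {I : Set P} (hI : IsIdeal I) {x y : P}
    (hxy : x ≤ y) (hy : y ∈ I) : x ∈ I :=
  hI.2.1 hxy hy

section Ideals

variable {P : Type*} [SemilatticeSup P] {I : Set P}

theorem IsIdeal.sup_mem (hI : IsIdeal I) {x y : P} (hx : x ∈ I) (hy : y ∈ I) : x ⊔ y ∈ I := by
  obtain ⟨z, hz, hxz, hyz⟩ := hI.2.2 x hx y hy
  exact hI.mem_of_le (sup_le hxz hyz) hz

theorem IsIdeal.exists_forall_lt (hI : IsIdeal I) {p : ℕ → P → Prop} (hp : ∀ t, Monotone (p t))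
    (n : ℕ) (h : ∀ t < n, ∃ y ∈ I, p t y) : ∃ y ∈ I, ∀ t < n, p t y := by
  induction n with
  | zero =>
    obtain ⟨y, hy⟩ := hI.1
    exact ⟨y, hy, fun t ht => absurd ht t.not_lt_zero⟩
  | succ n ih =>
    obtain ⟨y, hy, hyp⟩ := ih fun t ht => h t (ht.trans n.lt_succ_self)
    obtain ⟨y', hy', hy'p⟩ := h n n.lt_succ_self
    refine ⟨y ⊔ y', hI.sup_mem hy hy', fun t ht => ?_⟩
    rcases Nat.lt_succ_iff_lt_or_eq.1 ht with ht | rfl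
    · exact hp t le_sup_left (hyp t ht)
    · exact hp t le_sup_right hy'p

end Ideals

section NonSeparating

variable {P : Type*} [SemilatticeSup P] {I : ℕ → Set P} {x : ℕ → P}

theorem not_separating_image_of_cover (hanti : Antitone I) (hxmem : ∀ m, x m ∈ I m)
    (hxnot : ∀ m, x m ∉ I (m + 1)) (hcover : ∀ m k, I (m + 1) ⊆ joinIdeal (x m) (I k))
    {S : Set ℕ} (hS : S.Infinite) : ¬ Separating (I '' S) := by
  intro hsep
  obtain ⟨m, hm⟩ := hS.nonempty
  obtain ⟨n, hn, hmn⟩ := hS.exists_gt m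
  have hxn : x m ∉ I n := fun h => hxnot m (hanti hmn h)
  have hxU : x m ∈ ⋃₀ (I '' S) := ⟨I m, mem_image_of_mem I hm, hxmem m⟩
  obtain ⟨_, ⟨k, -, rfl⟩, hk⟩ :=
    hsep (I n) (mem_image_of_mem I hn) (fun h => hxn (h ▸ hxU)) (x m) hxU hxn
  exact hk ((hanti hmn).trans (hcover m k))

theorem exists_nonSeparating_chain_of_cover (hI : ∀ n, IsIdeal (I n)) (hanti : Antitone I)
    (hxmem : ∀ m, x m ∈ I m) (hxnot : ∀ m, x m ∉ I (m + 1))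
    (hcover : ∀ m k, I (m + 1) ⊆ joinIdeal (x m) (I k)) :
    ∃ I : ℕ → Set P, (∀ n, IsIdeal (I n)) ∧ StrictAnti I ∧
      ∀ S : Set ℕ, S.Infinite → ¬ Separating (I '' S) :=
  ⟨I, hI, strictAnti_nat_of_succ_lt fun m =>
      (hanti m.le_succ).lt_of_not_ge fun h => hxnot m (h (hxmem m)),
    fun _ => not_separating_image_of_cover hanti hxmem hxnot hcover⟩

theorem exists_nonSeparating_chain_of_strictAnti {g : ℕ → P} (hg : StrictAnti g) :
    ∃ I : ℕ → Set P, (∀ n, IsIdeal (I n)) ∧ StrictAnti I ∧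
      ∀ S : Set ℕ, S.Infinite → ¬ Separating (I '' S) :=
  exists_nonSeparating_chain_of_cover (I := fun n => Iic (g n)) (x := g)
    (fun n => isIdeal_Iic (g n)) (fun _ _ h => Iic_subset_Iic.2 (hg.antitone h))
    (fun _ => le_rfl) (fun m => (hg m.lt_succ_self).not_ge)
    (fun m k _ hz => ⟨g k, le_rfl, hz.trans ((hg m.lt_succ_self).le.trans le_sup_left)⟩)

theorem exists_nonSeparating_chain_of_joinEmbeds {f : OmegaStar → P}
    (hinj : Function.Injective f) (hf : ∀ a b, f (a ⊔ b) = f a ⊔ f b) :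
    ∃ I : ℕ → Set P, (∀ n, IsIdeal (I n)) ∧ StrictAnti I ∧
      ∀ S : Set ℕ, S.Infinite → ¬ Separating (I '' S) := by
  let I : ℕ → Set P := fun n => {z | ∃ a : OmegaStar, n ≤ a.1.1 ∧ z ≤ f a}
  let x : ℕ → P := fun m => f ⟨(m, m + 1), m.lt_succ_self⟩
  have hxmem : ∀ m, x m ∈ I m := fun m => ⟨_, le_rfl, le_rfl⟩
  refine exists_nonSeparating_chain_of_cover (I := I) (x := x) (fun n => ⟨⟨x n, hxmem n⟩, ?_, ?_⟩)
    (fun m n hmn z ⟨a, ha, hz⟩ => ⟨a, hmn.trans ha, hz⟩) hxmem ?_ ?_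
  · rintro z z' hzz' ⟨a, ha, hz'⟩
    exact ⟨a, ha, hzz'.trans hz'⟩
  · rintro z ⟨a, ha, hz⟩ z' ⟨b, hb, hz'⟩
    refine ⟨f (a ⊔ b), ⟨a ⊔ b, le_min ha hb, le_rfl⟩, ?_, ?_⟩ <;> rw [hf]
    exacts [hz.trans le_sup_left, hz'.trans le_sup_right]
  · rintro m ⟨a, ha, hle⟩
    have : a.1.1 ≤ m := (le_of_map_le_of_map_sup hinj hf hle).1
    omega
  · rintro m k z ⟨a, ha, hz⟩
    refine ⟨f ⟨(k, a.1.2 + k + 1), by omega⟩, ⟨_, le_rfl, le_rfl⟩, ?_⟩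
    have hle : a ≤ ⟨(m, m + 1), m.lt_succ_self⟩ ⊔ ⟨(k, a.1.2 + k + 1), by omega⟩ :=
      ⟨(min_le_left m k).trans (by omega), le_max_of_le_right (by simp only; omega)⟩
    exact hz.trans ((monotone_of_map_sup hf hle).trans_eq (hf _ _))

end NonSeparating

section Pattern

variable {P : Type*} [SemilatticeSup P]

/-- The conditions on `x, w : ℕ → P` under which `(i, j) ↦ x i ⊔ w j` embeds `Ω(ω*)`. -/
structure OmegaStarPattern (x w : ℕ → P) : Prop where
  le_left : ∀ ⦃t j⦄, t < j → x j ≤ x t ⊔ w j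
  le_succ : ∀ ⦃t j⦄, t < j → w j ≤ x t ⊔ w (j + 1)
  not_le_left : ∀ ⦃i i' j⦄, i < i' → i' < j → ¬ x i ≤ x i' ⊔ w j
  not_le_succ : ∀ ⦃t j⦄, t < j → ¬ w (j + 1) ≤ x t ⊔ w j

def omegaStarMap (x w : ℕ → P) (p : OmegaStar) : P := x p.1.1 ⊔ w p.1.2

namespace OmegaStarPattern

variable {x w : ℕ → P}

theorem w_le (h : OmegaStarPattern x w) {t m j : ℕ} (htm : t < m) (hmj : m ≤ j) :
    w m ≤ x t ⊔ w j := by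
  induction j, hmj using Nat.le_induction with
  | base => exact le_sup_right
  | succ j hmj ih => exact ih.trans (sup_le le_sup_left (h.le_succ (htm.trans_le hmj)))

theorem x_le (h : OmegaStarPattern x w) {t s j : ℕ} (hts : t < s) (hsj : s ≤ j) :
    x s ≤ x t ⊔ w j :=
  (h.le_left hts).trans (sup_le le_sup_left (h.w_le hts hsj))

theorem not_w_le (h : OmegaStarPattern x w) {t m j : ℕ} (htm : t < m) (hmj : m < j) :
    ¬ w j ≤ x t ⊔ w m := by
  obtain ⟨j, rfl⟩ : ∃ j', j = j' + 1 := ⟨j - 1, by omega⟩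
  exact fun hle => h.not_le_succ (htm.trans_le (by omega))
    (hle.trans (sup_le le_sup_left (h.w_le htm (by omega))))

theorem omegaStarMap_le_iff (h : OmegaStarPattern x w) (p q : OmegaStar) :
    omegaStarMap x w p ≤ omegaStarMap x w q ↔ p ≤ q := by
  obtain ⟨⟨i, j⟩, hij⟩ := p
  obtain ⟨⟨i', j'⟩, hij'⟩ := q
  change x i ⊔ w j ≤ x i' ⊔ w j' ↔ i' ≤ i ∧ j ≤ j'
  refine ⟨fun hle => ⟨?_, ?_⟩, fun ⟨hi, hj⟩ => sup_le ?_ (h.w_le (hi.trans_lt hij) hj)⟩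
  · by_contra! hi
    exact h.not_le_left hi hij' (le_sup_left.trans hle)
  · by_contra! hj
    exact h.not_w_le hij' hj (le_sup_right.trans hle)
  · rcases hi.eq_or_lt with rfl | hi
    · exact le_sup_left
    · exact h.x_le hi (hij.le.trans hj)

theorem omegaStarMap_sup (h : OmegaStarPattern x w) (p q : OmegaStar) :
    omegaStarMap x w (p ⊔ q) = omegaStarMap x w p ⊔ omegaStarMap x w q := by
  have hmono : Monotone (omegaStarMap x w) := fun p q => (h.omegaStarMap_le_iff p q).2
  refine le_antisymm (sup_le ?_ ?_) (sup_le (hmono le_sup_left) (hmono le_sup_right))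
  · change x (min p.1.1 q.1.1) ≤ _
    rcases min_choice p.1.1 q.1.1 with hm | hm <;> rw [hm]
    exacts [le_sup_left.trans le_sup_left, le_sup_left.trans le_sup_right]
  · change w (max p.1.2 q.1.2) ≤ _
    rcases max_choice p.1.2 q.1.2 with hm | hm <;> rw [hm]
    exacts [le_sup_right.trans le_sup_left, le_sup_right.trans le_sup_right]

theorem joinEmbeds (h : OmegaStarPattern x w) : JoinEmbeds OmegaStar P :=
  ⟨omegaStarMap x w,
    fun p q hpq => le_antisymm ((h.omegaStarMap_le_iff p q).1 hpq.le)
      ((h.omegaStarMap_le_iff q p).1 hpq.ge),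
    h.omegaStarMap_sup⟩

end OmegaStarPattern

end Pattern

section Backward

variable {P : Type*} [SemilatticeSup P]

theorem exists_omegaStarPattern {J : ℕ → Set P} (hJ : ∀ n, IsIdeal (J n)) (hanti : Antitone J)
    {x : ℕ → P} (hxmem : ∀ t, x t ∈ J t) (hxnot : ∀ t, x t ∉ J (t + 1))
    (hcover : ∀ t k, t ≤ k → J (t + 1) ⊆ joinIdeal (x t) (J k))
    (hgap : ∀ k b, b ∈ J 0 → b ∉ J k → ¬ J k ⊆ Iic b) :
    ∃ w, OmegaStarPattern x w := by
  have mono_le (c : P) (t : ℕ) : Monotone fun b => c ≤ x t ⊔ b :=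
    fun _ _ hb hc => hc.trans (sup_le_sup_left hb _)
  have mono_not_le (c : P) : Monotone fun b => ¬ b ≤ c :=
    fun _ _ hb hbc hb' => hbc (hb.trans hb')
  have step : ∀ j a, a ∈ J j → ∃ b, b ∈ J (j + 1) ∧ (∀ t < j + 1, x (j + 1) ≤ x t ⊔ b) ∧
      (∀ t < j, a ≤ x t ⊔ b) ∧ (∀ t < j, ¬ b ≤ x t ⊔ a) := by
    intro j a ha
    obtain ⟨b₁, hb₁, h₁⟩ := (hJ (j + 1)).exists_forall_lt (mono_le (x (j + 1))) (j + 1)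
      fun t ht => hcover t (j + 1) (by omega) (hanti (by omega) (hxmem (j + 1)))
    obtain ⟨b₂, hb₂, h₂⟩ := (hJ (j + 1)).exists_forall_lt (mono_le a) j
      fun t ht => hcover t (j + 1) (by omega) (hanti (by omega) ha)
    -- `x t ⊔ a` lies in `J 0` but not in `J (j + 1)`, since `x t ∉ J (t + 1)`
    obtain ⟨b₃, hb₃, h₃⟩ := (hJ (j + 1)).exists_forall_lt (fun t => mono_not_le (x t ⊔ a)) j
      fun t ht => by
        have hgap' := hgap (j + 1) (x t ⊔ a)
          ((hJ 0).sup_mem (hanti (Nat.zero_le t) (hxmem t)) (hanti (Nat.zero_le j) ha))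
          fun hmem => hxnot t (hanti (by omega) ((hJ _).mem_of_le le_sup_left hmem))
        exact not_subset.1 hgap'
    refine ⟨b₁ ⊔ b₂ ⊔ b₃, (hJ _).sup_mem ((hJ _).sup_mem hb₁ hb₂) hb₃,
      fun t ht => mono_le _ t (le_sup_left.trans le_sup_left) (h₁ t ht),
      fun t ht => mono_le a t (le_sup_right.trans le_sup_left) (h₂ t ht),
      fun t ht => mono_not_le _ le_sup_right (h₃ t ht)⟩
  obtain ⟨w, hw⟩ := exists_seq_of_forall_exists_succ (hJ 0).1 step
  refine ⟨w, ⟨?_, fun t j h => (hw j).2.2.1 t h, ?_, fun t j h => (hw j).2.2.2 t h⟩⟩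
  · rintro t (_ | j) htj
    · exact absurd htj t.not_lt_zero
    · exact (hw j).2.1 t htj
  · intro i i' j hii' hi'j hle
    exact hxnot i ((hJ _).mem_of_le hle
      ((hJ _).sup_mem (hanti hii' (hxmem i')) (hanti (by omega) (hw j).1)))

theorem exists_cover_of_not_separating_Ici {I : ℕ → Set P} (hanti : Antitone I) {c : ℕ}
    (h : ¬ Separating (I '' Ici c)) :
    ∃ n, c ≤ n ∧ ∃ x ∈ I c, x ∉ I n ∧ ∀ k, c ≤ k → I n ⊆ joinIdeal x (I k) := by
  rw [Separating] at h
  push Not at h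
  obtain ⟨_, ⟨n, hn, rfl⟩, -, x, hx, hxn, hcov⟩ := h
  rw [sUnion_image_Ici_of_antitone hanti] at hx
  exact ⟨n, hn, x, hx, hxn, fun k hk => hcov _ ⟨k, hk, rfl⟩⟩

theorem exists_strictAnti_or_joinEmbeds {I : ℕ → Set P} (hI : ∀ n, IsIdeal (I n))
    (hanti : Antitone I) (hNS : ∀ c, ¬ Separating (I '' Ici c)) :
    (∃ g : ℕ → P, StrictAnti g) ∨ JoinEmbeds OmegaStar P := by
  choose next hnext x hxmem hxnot hcover using
    fun c => exists_cover_of_not_separating_Ici hanti (hNS c)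
  by_cases hdesc : ∀ K, ∃ K' b, b ∈ I K ∧ b ∉ I K' ∧ I K' ⊆ Iic b
  · exact .inl (exists_strictAnti_of_forall_subset_Iic hdesc)
  push Not at hdesc
  obtain ⟨K, hK⟩ := hdesc
  let M : ℕ → ℕ := fun t => next^[t] K
  have hM : Monotone M := monotone_nat_of_le_succ fun t => by
    simp only [M, Function.iterate_succ_apply']
    exact hnext _
  have hMsucc : ∀ t, M (t + 1) = next (M t) := fun t => Function.iterate_succ_apply' next t K
  obtain ⟨w, hw⟩ := exists_omegaStarPattern (J := I ∘ M) (x := x ∘ M) (fun t => hI (M t))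
    (hanti.comp_monotone hM) (fun t => hxmem (M t))
    (fun t => by simpa only [Function.comp_apply, hMsucc] using hxnot (M t))
    (fun t k htk => by simpa only [Function.comp_apply, hMsucc] using hcover (M t) (M k) (hM htk))
    (fun k => hK (M k))
  exact .inr hw.joinEmbeds

end Backward

/-- `P` contains `ω*` or `Ω(ω*)` as a join-subsemilattice iff it contains an
`ω*`-chain of ideals all of whose infinite subchains are non-separating. -/
theorem stmt_7 {P : Type*} [SemilatticeSup P] :
    ((∃ g : ℕ → P, StrictAnti g) ∨ JoinEmbeds OmegaStar P) ↔
      (∃ I : ℕ → Set P, (∀ n, IsIdeal (I n)) ∧ StrictAnti I ∧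
        ∀ S : Set ℕ, S.Infinite → ¬ Separating (I '' S)) := by
  constructor
  · rintro (⟨g, hg⟩ | ⟨f, hinj, hf⟩)
    · exact exists_nonSeparating_chain_of_strictAnti hg
    · exact exists_nonSeparating_chain_of_joinEmbeds hinj hf
  · rintro ⟨I, hI, hanti, hNS⟩
    exact exists_strictAnti_or_joinEmbeds hI hanti.antitone fun c => hNS _ (Ici_infinite c)
end

section
/- A poset P is isomorphic to I_{<ω}(Q) for some poset Q if and only if P is a join-semilattice with a least element in which every element is a finite join of join-prime elements. -/
universe u

/-- `p` is join-prime in a poset with least element `b`. -/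
def IsPrimeIn {P : Type*} [PartialOrder P] (b p : P) : Prop :=
  p ≠ b ∧ ∀ a c z : P, IsLUB {a, c} z → p ≤ z → p ≤ a ∨ p ≤ c

/-! In a join-semilattice with least element, `IsPrimeIn ⊥` is `SupPrime`. In `I_{<ω}(Q)` the join
is union, so every principal segment `↓a` is join-prime, and a segment is the join of the `↓a` over
its generators. Conversely, `x ↦ {p join-prime | p ≤ x}` is an isomorphism of `P` onto
`I_{<ω}` of its join-primes: if `x` is the join of the primes in `F`, a prime lies below `x` iff
it lies below a member of `F`, so this set is the segment generated by `F`. -/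

def IsJoinPrimeGenerated (P : Type*) [PartialOrder P] : Prop :=
  (∀ x y : P, ∃ z, IsLUB {x, y} z) ∧
    ∃ b : P, (∀ x, b ≤ x) ∧ ∀ x : P, ∃ F : Finset P, (∀ p ∈ F, IsPrimeIn b p) ∧ IsLUB ↑F x

section OrderIso

variable {P R : Type*} [PartialOrder P] [PartialOrder R]

lemma IsPrimeIn.map (e : P ≃o R) {b p : P} (hp : IsPrimeIn b p) : IsPrimeIn (e b) (e p) := by
  refine ⟨e.injective.ne hp.1, fun a c z hz hpz => ?_⟩
  have hz' : IsLUB {e.symm a, e.symm c} (e.symm z) := by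
    rw [← Set.image_pair]
    exact e.symm.isLUB_image'.2 hz
  simpa only [← e.le_symm_apply] using hp.2 _ _ _ hz' (e.le_symm_apply.2 hpz)

lemma IsJoinPrimeGenerated.map (e : P ≃o R) (h : IsJoinPrimeGenerated P) :
    IsJoinPrimeGenerated R := by
  obtain ⟨hsup, b, hb, hdec⟩ := h
  refine ⟨fun x y => ?_, e b, fun x => e.le_symm_apply.1 (hb _), fun x => ?_⟩
  · obtain ⟨z, hz⟩ := hsup (e.symm x) (e.symm y)
    refine ⟨e z, ?_⟩
    simpa only [Set.image_pair, e.apply_symm_apply] using e.isLUB_image'.2 hz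
  · obtain ⟨F, hF, hFx⟩ := hdec (e.symm x)
    classical
    refine ⟨F.image e, Finset.forall_mem_image.2 fun p hp => (hF p hp).map e, ?_⟩
    simpa only [Finset.coe_image, e.apply_symm_apply] using e.isLUB_image'.2 hFx

end OrderIso

section SemilatticeSup

variable {P : Type*} [SemilatticeSup P] [OrderBot P]

lemma isPrimeIn_bot_iff {p : P} : IsPrimeIn ⊥ p ↔ SupPrime p := by
  refine ⟨fun ⟨hne, h⟩ => ⟨not_isMin_iff_ne_bot.2 hne, fun a c => h a c _ isLUB_pair⟩,
    fun ⟨hmin, h⟩ => ⟨not_isMin_iff_ne_bot.1 hmin, fun a c z hz => ?_⟩⟩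
  rw [hz.unique isLUB_pair]
  exact @h a c

lemma isJoinPrimeGenerated_iff :
    IsJoinPrimeGenerated P ↔ ∀ x : P, ∃ F : Finset P, (∀ p ∈ F, SupPrime p) ∧ F.sup id = x := by
  constructor
  · rintro ⟨-, b, hb, hdec⟩ x
    obtain rfl : b = ⊥ := le_bot_iff.1 (hb ⊥)
    obtain ⟨F, hF, hFx⟩ := hdec x
    exact ⟨F, fun p hp => isPrimeIn_bot_iff.1 (hF p hp), Finset.isLUB_sup_id.unique hFx⟩
  · intro hdec
    refine ⟨fun x y => ⟨_, isLUB_pair⟩, ⊥, fun _ => bot_le, fun x => ?_⟩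
    obtain ⟨F, hF, rfl⟩ := hdec x
    exact ⟨F, fun p hp => isPrimeIn_bot_iff.2 (hF p hp), Finset.isLUB_sup_id⟩

end SemilatticeSup

namespace FinGenInitSeg

variable {Q : Type*} [Preorder Q]

lemma isLowerSet (S : FinGenInitSeg Q) : IsLowerSet S.1 := by
  obtain ⟨F, hF⟩ := S.2
  rw [hF]
  rintro x y hyx ⟨z, hz, hxz⟩
  exact ⟨z, hz, hyx.trans hxz⟩

instance : SemilatticeSup (FinGenInitSeg Q) where
  sup S T := ⟨S.1 ∪ T.1, by
    obtain ⟨F, hF⟩ := S.2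
    obtain ⟨G, hG⟩ := T.2
    classical
    refine ⟨F ∪ G, ?_⟩
    ext x
    simp [hF, hG, or_and_right, exists_or]⟩
  le_sup_left _ _ := Set.subset_union_left
  le_sup_right _ _ := Set.subset_union_right
  sup_le _ _ _ := Set.union_subset

instance : OrderBot (FinGenInitSeg Q) where
  bot := ⟨∅, ∅, by simp⟩
  bot_le _ := Set.empty_subset _

lemma val_sup (S T : FinGenInitSeg Q) : (S ⊔ T).1 = S.1 ∪ T.1 := rfl

def Iic (a : Q) : FinGenInitSeg Q := ⟨Set.Iic a, {a}, by ext; simp⟩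

lemma Iic_le_iff {a : Q} {S : FinGenInitSeg Q} : Iic a ≤ S ↔ a ∈ S.1 :=
  ⟨fun h => h le_rfl, fun h _ hx => S.isLowerSet hx h⟩

lemma supPrime_Iic (a : Q) : SupPrime (Iic a) := by
  refine ⟨not_isMin_iff_ne_bot.2 fun h => ?_, fun S T => ?_⟩
  · exact (Iic_le_iff.1 h.le : a ∈ (∅ : Set Q))
  · simp only [Iic_le_iff, val_sup, Set.mem_union, imp_self]

lemma exists_finset_sup_Iic (S : FinGenInitSeg Q) : ∃ F : Finset Q, F.sup Iic = S := by
  obtain ⟨F, hF⟩ := S.2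
  refine ⟨F, le_antisymm (Finset.sup_le fun a ha => Iic_le_iff.2 ?_) fun x hx => ?_⟩
  · rw [hF]
    exact ⟨a, ha, le_rfl⟩
  · rw [hF] at hx
    obtain ⟨a, ha, hxa⟩ := hx
    exact Finset.le_sup (f := Iic) ha hxa

lemma isJoinPrimeGenerated : IsJoinPrimeGenerated (FinGenInitSeg Q) := by
  classical
  refine isJoinPrimeGenerated_iff.2 fun S => ?_
  obtain ⟨F, rfl⟩ := S.exists_finset_sup_Iic
  refine ⟨F.image Iic, ?_, by rw [Finset.sup_image]; rfl⟩
  simp only [Finset.mem_image]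
  rintro _ ⟨a, -, rfl⟩
  exact supPrime_Iic a

end FinGenInitSeg

section Representation

variable {P : Type*} [SemilatticeSup P] [OrderBot P]
  (h : ∀ x : P, ∃ F : Finset P, (∀ p ∈ F, SupPrime p) ∧ F.sup id = x)
include h

lemma exists_finset_setOf_supPrime_le (x : P) :
    ∃ G : Finset {p : P // SupPrime p}, {q | q.1 ≤ x} = {q | ∃ r ∈ G, q ≤ r} := by
  classical
  obtain ⟨F, hF, rfl⟩ := h x
  refine ⟨F.subtype SupPrime, Set.ext fun q => ⟨fun hq => ?_, ?_⟩⟩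
  · obtain ⟨p, hp, hqp⟩ := q.2.le_finset_sup.1 hq
    exact ⟨⟨p, hF p hp⟩, Finset.mem_subtype.2 hp, hqp⟩
  · rintro ⟨r, hr, hqr⟩
    exact (Subtype.coe_le_coe.2 hqr).trans (Finset.le_sup (f := id) (Finset.mem_subtype.1 hr))

def supPrimesBelow (x : P) : FinGenInitSeg {p : P // SupPrime p} :=
  ⟨{q | q.1 ≤ x}, exists_finset_setOf_supPrime_le h x⟩

lemma supPrimesBelow_le_iff {x y : P} : supPrimesBelow h x ≤ supPrimesBelow h y ↔ x ≤ y := by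
  refine ⟨fun hxy => ?_, fun hxy q hq => le_trans hq hxy⟩
  obtain ⟨F, hF, rfl⟩ := h x
  exact Finset.sup_le fun p hp => hxy (a := ⟨p, hF p hp⟩) (Finset.le_sup (f := id) hp)

lemma surjective_supPrimesBelow : Function.Surjective (supPrimesBelow h) := by
  rintro ⟨S, G, rfl⟩
  exact ⟨G.sup Subtype.val, Subtype.ext <| Set.ext fun q => q.2.le_finset_sup⟩

noncomputable def orderIsoFinGenInitSeg : P ≃o FinGenInitSeg {p : P // SupPrime p} :=
  .ofSurjective (.ofMapLEIff _ fun _ _ => supPrimesBelow_le_iff h) (surjective_supPrimesBelow h)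

end Representation

/-- a poset `P` is isomorphic to `I_{<ω}(Q)` for some poset `Q` iff `P` is a
join-semilattice with least element in which every element is a finite join of join-primes. -/
theorem stmt_9 {P : Type u} [PartialOrder P] :
    (∃ (Q : Type u) (_ : PartialOrder Q), Nonempty (P ≃o FinGenInitSeg Q)) ↔
      ((∀ x y : P, ∃ z, IsLUB {x, y} z) ∧
        ∃ b : P, (∀ x, b ≤ x) ∧
          ∀ x : P, ∃ F : Finset P, (∀ p ∈ F, IsPrimeIn b p) ∧ IsLUB ↑F x) := by
  refine ⟨fun ⟨Q, _, ⟨e⟩⟩ => FinGenInitSeg.isJoinPrimeGenerated.map e.symm, fun h => ?_⟩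
  choose sup hsup using h.1
  let := SemilatticeSup.ofIsLUB sup hsup
  obtain ⟨b, hb, -⟩ := h.2
  let : OrderBot P := { bot := b, bot_le := hb }
  exact ⟨_, _, ⟨orderIsoFinGenInitSeg (isJoinPrimeGenerated_iff.1 h)⟩⟩
end

section
/- Let Q be a well-founded poset and 𝓕 ⊆ I_{<ω}(Q) a family of finitely generated initial segments. Let 𝓕^{<ω} be the set of finite unions of members of 𝓕 and 𝓕^∪ the set of arbitrary unions of members of 𝓕, both ordered by inclusion. Then the following are equivalent: (1) 𝓕 has no infinite antichain; (2) 𝓕^{<ω} is well-quasi-ordered; (6) [ω]^{<ω} does not embed into 𝓕^{<ω} as a poset; (7) 𝓕^∪ is well-founded. -/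
/-- Finite unions of members of `𝓕`. -/
def finUnions {Q : Type*} (𝓕 : Set (Set Q)) : Set (Set Q) :=
  {S | ∃ G : Finset (Set Q), ↑G ⊆ 𝓕 ∧ S = ⋃₀ ↑G}

/-- Arbitrary unions of members of `𝓕`. -/
def arbUnions {Q : Type*} (𝓕 : Set (Set Q)) : Set (Set Q) :=
  {S | ∃ T ⊆ 𝓕, S = ⋃₀ T}

/-- The subset `X` is well-founded for the induced order. -/
def WFOn {α : Type*} [Preorder α] (X : Set α) : Prop :=
  ∀ C ⊆ X, C.Nonempty → ∃ m ∈ C, ∀ b ∈ C, ¬ b < m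

/-- The subset `X` has no infinite antichain. -/
def NoInfAC {α : Type*} [Preorder α] (X : Set α) : Prop :=
  ¬ ∃ A ⊆ X, A.Infinite ∧ IsAntichain (· ≤ ·) A

/-!
Call a sequence of sets `C k` *separated* by points `x k` if `x k ∈ C j ↔ j = k`. A separated
sequence in `𝓕` yields an infinite antichain, the embedding `a ↦ ⋃ i ∈ a, C i` of `[ω]^{<ω}` into
`𝓕^{<ω}`, and the strictly decreasing chain `⋃ j ≥ k, C j` in `𝓕^∪`.

Conversely, every infinite antichain `B` of finitely generated lower sets of a well-founded poset
has a separated subsequence. Let `L` be the set of points lying in almost all `B m` along a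
nonprincipal ultrafilter. Choose a `⊂`-minimal finitely generated `D` with `B m ⊆ L ∪ D` for almost
all `m` (if there is one) and a point `g ∈ D \ L`. Then no finitely many `B j` with `g ∉ B j` cover
almost all `B m` modulo `L`, and points outside `L` can be picked greedily.

Finitely generated lower sets are well-founded under `⊂` (compare their antichains of generators
in the Dershowitz–Manna order). So if `𝓕` has no infinite antichain, it is a wqo, and a
descending chain in `𝓕^∪` would give a bad sequence in `𝓕`.
-/

open Set Filter

section Unions

variable {α : Type*} {𝓕 : Set (Set α)} {C : ℕ → Set α} {x : ℕ → α}

def Separates (x : ℕ → α) (C : ℕ → Set α) : Prop :=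
  ∀ j k, x k ∈ C j ↔ j = k

theorem subset_finUnions : 𝓕 ⊆ finUnions 𝓕 :=
  fun S hS => ⟨{S}, by simpa using hS, by simp⟩

theorem biUnion_mem_finUnions {ι : Type*} {s : Set ι} (hs : s.Finite) {C : ι → Set α}
    (hC : ∀ i ∈ s, C i ∈ 𝓕) : ⋃ i ∈ s, C i ∈ finUnions 𝓕 := by
  classical
  refine ⟨hs.toFinset.image C, ?_, ?_⟩
  · simp only [Finset.coe_image, Finite.coe_toFinset]
    exact image_subset_iff.2 hC
  · simp [sUnion_image]

theorem finUnions_subset_arbUnions : finUnions 𝓕 ⊆ arbUnions 𝓕 :=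
  fun _ ⟨G, hG, hS⟩ => ⟨G, hG, hS⟩

theorem exists_mem_subset_of_mem_arbUnions {S : Set α} {a : α} (hS : S ∈ arbUnions 𝓕)
    (ha : a ∈ S) : ∃ A ∈ 𝓕, a ∈ A ∧ A ⊆ S := by
  obtain ⟨T, hT, rfl⟩ := hS
  obtain ⟨A, hAT, haA⟩ := ha
  exact ⟨A, hT hAT, haA, subset_sUnion_of_mem hAT⟩

theorem isWF_arbUnions_of_isPWO (h : 𝓕.IsPWO) : (arbUnions 𝓕).IsWF := by
  refine isWF_iff_no_descending_seq.2 fun θ hθ hθ𝓕 => ?_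
  have hstep : ∀ n, ∃ a, ∃ A ∈ 𝓕, a ∈ A ∧ A ⊆ θ n ∧ a ∉ θ (n + 1) := fun n =>
    let ⟨a, ha, ha'⟩ := exists_of_ssubset (hθ (lt_add_one n))
    ⟨a, exists_mem_subset_of_mem_arbUnions (hθ𝓕 n) ha |>.imp fun _ hA => hA.imp_right
      fun hA => ⟨hA.1, hA.2, ha'⟩⟩
  choose a A hA haA hAθ haθ using hstep
  obtain ⟨m, n, hmn, hAmn⟩ := h.exists_lt hA
  exact haθ m (hθ.antitone hmn (hAθ n (hAmn (haA m))))

theorem Separates.injective (h : Separates x C) : Function.Injective C :=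
  fun j k hjk => (h j k).1 (hjk ▸ (h k k).2 rfl)

theorem Separates.not_noInfAC (h : Separates x C) (hC : ∀ k, C k ∈ 𝓕) : ¬ NoInfAC 𝓕 := by
  refine not_not.2 ⟨range C, range_subset_iff.2 hC, infinite_range_of_injective h.injective, ?_⟩
  rintro _ ⟨j, rfl⟩ _ ⟨k, rfl⟩ hne hjk
  exact hne (congrArg C ((h k j).1 (hjk ((h j j).2 rfl))).symm)

theorem Separates.mono {S : ℕ → Set α} (h : Separates x C) (hS : ∀ k, x k ∈ S k)
    (hSC : ∀ k, S k ⊆ C k) : Separates x S :=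
  fun j k => ⟨fun hk => (h j k).1 (hSC j hk), by rintro rfl; exact hS j⟩

theorem Separates.exists_of_forall_mem_arbUnions (h : Separates x C)
    (hC : ∀ k, C k ∈ arbUnions 𝓕) : ∃ S : ℕ → Set α, (∀ k, S k ∈ 𝓕) ∧ Separates x S := by
  choose S hS𝓕 hxS hSC using fun k => exists_mem_subset_of_mem_arbUnions (hC k) ((h k k).2 rfl)
  exact ⟨S, hS𝓕, h.mono hxS hSC⟩

theorem Separates.biUnion_subset_biUnion_iff (h : Separates x C) {s t : Set ℕ} :
    (⋃ i ∈ s, C i) ⊆ (⋃ i ∈ t, C i) ↔ s ⊆ t := by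
  refine ⟨fun hst i hi => ?_, biUnion_subset_biUnion_left⟩
  obtain ⟨j, hj, hij⟩ := mem_iUnion₂.1 (hst (mem_biUnion hi ((h i i).2 rfl)))
  exact (h j i).1 hij ▸ hj

theorem Separates.exists_finSets_embedding (h : Separates x C) (hC : ∀ k, C k ∈ 𝓕) :
    ∃ g : FinSets ℕ → Set α, (∀ a, g a ∈ finUnions 𝓕) ∧ ∀ a b, a ≤ b ↔ g a ⊆ g b :=
  ⟨fun a => ⋃ i ∈ a.1, C i, fun a => biUnion_mem_finUnions a.2 fun i _ => hC i,
    fun _ _ => h.biUnion_subset_biUnion_iff.symm⟩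

theorem Separates.not_isWF_arbUnions (h : Separates x C) (hC : ∀ k, C k ∈ 𝓕) :
    ¬ (arbUnions 𝓕).IsWF := by
  refine fun hwf => isWF_iff_no_descending_seq.1 hwf (fun k => ⋃ j ∈ Ici k, C j) ?_
    fun k => ⟨C '' Ici k, image_subset_iff.2 fun j _ => hC j, (sUnion_image _ _).symm⟩
  refine strictAnti_nat_of_succ_lt fun k => ssubset_of_subset_not_subset
    (biUnion_subset_biUnion_left (Ici_subset_Ici.2 k.le_succ)) fun hsub => ?_
  obtain ⟨j, hj, hkj⟩ := mem_iUnion₂.1 (hsub (mem_biUnion self_mem_Ici ((h k k).2 rfl)))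
  exact (Nat.lt_succ_self k).not_ge ((h j k).1 hkj ▸ hj)

theorem not_noInfAC_of_finSets_embedding {g : FinSets ℕ → Set α} (hg𝓕 : ∀ a, g a ∈ 𝓕)
    (hg : ∀ a b, a ≤ b ↔ g a ⊆ g b) : ¬ NoInfAC 𝓕 := by
  let s : ℕ → FinSets ℕ := fun n => ⟨{n}, finite_singleton n⟩
  have hs : ∀ n m, g (s n) ⊆ g (s m) → n = m := fun n m hnm =>
    singleton_subset_singleton.1 ((hg (s n) (s m)).2 hnm)
  refine not_not.2 ⟨range (g ∘ s), range_subset_iff.2 fun n => hg𝓕 (s n),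
    infinite_range_of_injective fun n m hnm => hs n m hnm.le, ?_⟩
  rintro _ ⟨n, rfl⟩ _ ⟨m, rfl⟩ hne hnm
  exact hne (by rw [hs n m hnm])

theorem exists_separates_of_eventually_not_subset (U : Ultrafilter ℕ) {B : ℕ → Set α}
    {W : Set ℕ} (hW : ∀ᶠ m in U, m ∈ W)
    (hB : ∀ J : Finset ℕ, ↑J ⊆ W → ∀ᶠ m in U, ¬ B m ⊆ liminf B U ∪ ⋃ j ∈ J, B j) :
    ∃ n : ℕ → ℕ, ∃ x : ℕ → α, Separates x (B ∘ n) := by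
  classical
  let P : ℕ × α → Prop := fun p => p.1 ∈ W ∧ p.2 ∈ B p.1 ∧ p.2 ∉ liminf B U
  -- Earlier points lie outside `liminf B U`, so almost every `B m` avoids them.
  let r : ℕ × α → ℕ × α → Prop := fun p q => q.2 ∉ B p.1 ∧ p.2 ∉ B q.1
  have hnext : ∀ s : Finset (ℕ × α), (∀ p ∈ s, P p) → ∃ q, P q ∧ ∀ p ∈ s, r p q := by
    intro s hs
    have hJ : ↑(s.image Prod.fst) ⊆ W := by
      intro j hj
      obtain ⟨p, hp, rfl⟩ := Finset.mem_image.1 hj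
      exact (hs p hp).1
    have hleave : ∀ᶠ m in U, ∀ p ∈ s, p.2 ∉ B m := (eventually_all_finset s).2 fun p hp =>
      Ultrafilter.eventually_not.2 fun h => (hs p hp).2.2 (mem_liminf_iff_eventually_mem.2 h)
    obtain ⟨m, hmW, hm, hms⟩ := (hW.and ((hB _ hJ).and hleave)).exists
    obtain ⟨x, hxB, hx⟩ := not_subset.1 hm
    refine ⟨(m, x), ⟨hmW, hxB, fun h => hx (Or.inl h)⟩, fun p hp => ⟨fun h => ?_, hms p hp⟩⟩
    exact hx (Or.inr (mem_biUnion (Finset.mem_image_of_mem Prod.fst hp) h))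
  obtain ⟨f, hfP, hfr⟩ := exists_seq_of_forall_finset_exists P r hnext
  refine ⟨fun k => (f k).1, fun k => (f k).2, fun j k => ⟨fun h => ?_, ?_⟩⟩
  · by_contra hjk
    rcases lt_or_gt_of_ne hjk with hlt | hlt
    · exact (hfr j k hlt).1 h
    · exact (hfr k j hlt).2 h
  · rintro rfl
    exact (hfP j).2.1

end Unions

section Preorder

variable {α : Type*} [Preorder α] {X : Set α}

theorem wfOn_iff_isWF : WFOn X ↔ X.IsWF := by
  refine ⟨fun h => isWF_iff_no_descending_seq.2 fun f hf hfX => ?_, fun h C hC hne => ?_⟩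
  · obtain ⟨_, ⟨k, rfl⟩, hk⟩ := h (range f) (range_subset_iff.2 hfX) (range_nonempty f)
    exact hk (f (k + 1)) ⟨k + 1, rfl⟩ (hf (lt_add_one k))
  · obtain ⟨m, hm⟩ := (h.mono hC).exists_minimal hne
    exact ⟨m, hm.prop, fun b hb => hm.not_lt hb⟩

theorem Set.IsWF.isPWO_of_noInfAC (hwf : X.IsWF) (h : NoInfAC X) : X.IsPWO := by
  have : WellFoundedLT X := ⟨hwf⟩
  have : WellQuasiOrderedLE X := wellQuasiOrderedLE_iff.2 ⟨inferInstance, fun s hs => by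
    by_contra hinf
    refine h ⟨(↑) '' s, ?_, (infinite_image_iff Subtype.val_injective.injOn).2 hinf,
      hs.image _ fun _ _ => id⟩
    rintro _ ⟨a, _, rfl⟩
    exact a.2⟩
  exact wellQuasiOrdered_le

end Preorder

section LowerClosure

variable {Q : Type*} [PartialOrder Q]

def IsFGLower (S : Set Q) : Prop :=
  ∃ F : Finset Q, S = lowerClosure (F : Set Q)

theorem IsFGLower.isLowerSet {S : Set Q} (hS : IsFGLower S) : IsLowerSet S := by
  obtain ⟨F, rfl⟩ := hS
  exact (lowerClosure _).lower

theorem IsLowerSet.lowerClosure_subset {s t : Set Q} (ht : IsLowerSet t) (h : s ⊆ t) :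
    (lowerClosure s : Set Q) ⊆ t :=
  fun _ ⟨_, hy, hxy⟩ => ht hxy (h hy)

theorem IsFGLower.lowerClosure_diff {S L : Set Q} (hS : IsFGLower S) (hL : IsLowerSet L) :
    IsFGLower (lowerClosure (S \ L) : Set Q) := by
  classical
  obtain ⟨F, rfl⟩ := hS
  refine ⟨{y ∈ F | y ∉ L}, congrArg SetLike.coe (le_antisymm ?_ ?_)⟩
  · refine lowerClosure_le.2 ?_
    rintro x ⟨⟨y, hyF, hxy⟩, hxL⟩
    exact ⟨y, Finset.mem_filter.2 ⟨hyF, fun hyL => hxL (hL hxy hyL)⟩, hxy⟩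
  · exact lowerClosure_mono fun y hy =>
      ⟨subset_lowerClosure (Finset.mem_filter.1 hy).1, (Finset.mem_filter.1 hy).2⟩

theorem isFGLower_biUnion {ι : Type*} (J : Finset ι) {S : ι → Set Q}
    (hS : ∀ j ∈ J, IsFGLower (S j)) : IsFGLower (⋃ j ∈ J, S j) := by
  classical
  choose! F hF using hS
  refine ⟨J.biUnion F, Set.ext fun x => ?_⟩
  simp only [mem_iUnion, SetLike.mem_coe, mem_lowerClosure, Finset.coe_biUnion]
  constructor
  · rintro ⟨j, hj, hx⟩
    rw [hF j hj] at hx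
    obtain ⟨y, hy, hxy⟩ := hx
    exact ⟨y, ⟨j, hj, hy⟩, hxy⟩
  · rintro ⟨y, ⟨j, hj, hy⟩, hxy⟩
    exact ⟨j, hj, by rw [hF j hj]; exact ⟨y, hy, hxy⟩⟩

theorem IsFGLower.exists_isAntichain {S : Set Q} (hS : IsFGLower S) :
    ∃ G : Finset Q, S = lowerClosure (G : Set Q) ∧ IsAntichain (· ≤ ·) (G : Set Q) := by
  classical
  obtain ⟨F, rfl⟩ := hS
  refine ⟨{x ∈ F | Maximal (· ∈ F) x}, ?_, ?_⟩
  · ext x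
    simp only [SetLike.mem_coe, mem_lowerClosure, Finset.coe_filter, mem_ofPred_eq]
    constructor
    · rintro ⟨y, hy, hxy⟩
      obtain ⟨z, hyz, hz⟩ := F.exists_le_maximal hy
      exact ⟨z, ⟨hz.prop, hz⟩, hxy.trans hyz⟩
    · rintro ⟨y, ⟨hy, _⟩, hxy⟩
      exact ⟨y, hy, hxy⟩
  · exact (setOfPred_maximal_antichain (· ∈ F)).subset fun x hx => (Finset.mem_filter.1 hx).2

theorem isDershowitzMannaLT_of_lowerClosure_ssubset [DecidableEq Q] {F G : Finset Q}
    (hG : IsAntichain (· ≤ ·) (G : Set Q))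
    (h : (lowerClosure (G : Set Q) : Set Q) ⊂ lowerClosure (F : Set Q)) :
    Multiset.IsDershowitzMannaLT G.val F.val := by
  refine ⟨(G ∩ F).val, (G \ F).val, (F \ G).val, ?_, ?_, ?_, ?_⟩
  · intro hZ
    have hFG : F ⊆ G := Finset.sdiff_eq_empty_iff_subset.1 (Finset.val_eq_zero.1 hZ)
    exact h.not_subset (lowerClosure_mono (Finset.coe_subset.2 hFG))
  · rw [Finset.inter_val, Finset.sdiff_val, add_comm, Multiset.sub_add_inter]
  · rw [Finset.inter_comm, Finset.inter_val, Finset.sdiff_val, add_comm, Multiset.sub_add_inter]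
  · intro y hy
    obtain ⟨hyG, hyF⟩ := Finset.mem_sdiff.1 hy
    obtain ⟨a, haF, hya⟩ := h.subset (subset_lowerClosure hyG)
    have hne : y ≠ a := fun hya' => hyF (hya' ▸ haF)
    have haG : a ∉ G := fun haG => hne (hG.eq hyG haG hya)
    exact ⟨a, Finset.mem_sdiff.2 ⟨haF, haG⟩, hya.lt_of_ne hne⟩

theorem isWF_setOf_isFGLower [WellFoundedLT Q] : {S : Set Q | IsFGLower S}.IsWF := by
  classical
  choose! gen hgen hanti using fun (S : Set Q) (hS : IsFGLower S) => hS.exists_isAntichain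
  refine Subrelation.wf (r := InvImage Multiset.IsDershowitzMannaLT
    fun S : {S : Set Q | IsFGLower S} => (gen S.1).val) ?_
    (InvImage.wf _ Multiset.wellFounded_isDershowitzMannaLT)
  rintro ⟨S, hS⟩ ⟨T, hT⟩ (h : S ⊂ T)
  apply isDershowitzMannaLT_of_lowerClosure_ssubset (hanti S hS)
  rwa [← hgen S hS, ← hgen T hT]

theorem isFGLower_of_mem_finUnions (h𝓕 : ∀ S ∈ 𝓕, IsFGLower S) {S : Set Q}
    (hS : S ∈ finUnions 𝓕) : IsFGLower S := by
  obtain ⟨G, hG, rfl⟩ := hS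
  rw [sUnion_eq_biUnion]
  exact isFGLower_biUnion G fun A hA => h𝓕 A (hG hA)

end LowerClosure

section Hyperfilter

variable {Q : Type*} [PartialOrder Q] {B : ℕ → Set Q}

theorem not_eventually_subset_liminf (hB : ∀ m, IsFGLower (B m))
    (hanti : Pairwise fun n m => ¬ B n ⊆ B m) :
    ¬ ∀ᶠ m in hyperfilter ℕ, B m ⊆ liminf B (hyperfilter ℕ) := by
  intro h
  obtain ⟨m₀, hm₀⟩ := h.exists
  obtain ⟨F, hF⟩ := hB m₀
  have hgen : ∀ᶠ m in hyperfilter ℕ, ∀ y ∈ F, y ∈ B m := (eventually_all_finset F).2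
    fun y hy => mem_liminf_iff_eventually_mem.1 (hm₀ (hF ▸ subset_lowerClosure hy))
  obtain ⟨m, hm, hne⟩ := (hgen.and (finite_singleton m₀).compl_mem_hyperfilter).exists
  exact hanti (Ne.symm hne) (hF ▸ (hB m).isLowerSet.lowerClosure_subset hm)

theorem exists_eventually_not_subset_liminf_union [WellFoundedLT Q]
    (hB : ∀ m, IsFGLower (B m)) (hanti : Pairwise fun n m => ¬ B n ⊆ B m) :
    ∃ W : Set ℕ, (∀ᶠ m in hyperfilter ℕ, m ∈ W) ∧ ∀ J : Finset ℕ, ↑J ⊆ W →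
      ∀ᶠ m in hyperfilter ℕ, ¬ B m ⊆ liminf B (hyperfilter ℕ) ∪ ⋃ j ∈ J, B j := by
  set U : Ultrafilter ℕ := hyperfilter ℕ
  set L := liminf B (U : Filter ℕ)
  have hL : IsLowerSet L := fun _ _ hba ha => mem_liminf_iff_eventually_mem.2
    ((mem_liminf_iff_eventually_mem.1 ha).mono fun m hm => (hB m).isLowerSet hba hm)
  let 𝒟 : Set (Set Q) := {D | IsFGLower D ∧ ∀ᶠ m in U, B m ⊆ L ∪ D}
  let E : Finset ℕ → Set Q := fun J => ⋃ j ∈ J, lowerClosure (B j \ L)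
  suffices h : ∃ W : Set ℕ, (∀ᶠ m in U, m ∈ W) ∧ ∀ J : Finset ℕ, ↑J ⊆ W → E J ∉ 𝒟 by
    obtain ⟨W, hW, hWE⟩ := h
    refine ⟨W, hW, fun J hJ => Ultrafilter.eventually_not.2 fun hcov => hWE J hJ
      ⟨isFGLower_biUnion J fun j _ => (hB j).lowerClosure_diff hL, hcov.mono fun m hm => ?_⟩⟩
    refine hm.trans (union_subset subset_union_left (iUnion₂_subset fun j hj x hx => ?_))
    by_cases hxL : x ∈ L
    · exact Or.inl hxL
    · exact Or.inr (mem_biUnion hj (subset_lowerClosure ⟨hx, hxL⟩))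
  rcases 𝒟.eq_empty_or_nonempty with h𝒟 | h𝒟
  · exact ⟨univ, univ_mem, fun J _ hJ => h𝒟.subset hJ⟩
  obtain ⟨D, hD⟩ := (isWF_setOf_isFGLower.mono fun D (hD : D ∈ 𝒟) => hD.1).exists_minimal h𝒟
  obtain ⟨g, hgD, hgL⟩ : ∃ g ∈ D, g ∉ L := not_subset.1 fun hDL =>
    not_eventually_subset_liminf hB hanti
      (hD.prop.2.mono fun m hm => by rwa [union_eq_left.2 hDL] at hm)
  refine ⟨{m | B m ⊆ L ∪ D ∧ g ∉ B m}, hD.prop.2.and (Ultrafilter.eventually_not.2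
    fun h => hgL (mem_liminf_iff_eventually_mem.2 h)), fun J hJ hE => hD.not_lt hE ?_⟩
  refine ssubset_of_subset_not_subset (iUnion₂_subset fun j hj => ?_) fun hDE => ?_
  · exact hD.prop.1.isLowerSet.lowerClosure_subset fun x hx => ((hJ hj).1 hx.1).resolve_left hx.2
  · obtain ⟨j, hj, hgj⟩ := mem_iUnion₂.1 (hDE hgD)
    exact (hJ hj).2 ((hB j).isLowerSet.lowerClosure_subset sdiff_subset hgj)

end Hyperfilter

section FGFamilies

variable {Q : Type*} [PartialOrder Q] [WellFoundedLT Q] {𝓕 : Set (Set Q)}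

theorem exists_separates_of_pairwise_not_subset {B : ℕ → Set Q} (hB : ∀ m, IsFGLower (B m))
    (hanti : Pairwise fun n m => ¬ B n ⊆ B m) :
    ∃ n : ℕ → ℕ, ∃ x : ℕ → Q, Separates x (B ∘ n) :=
  let ⟨_, hW, hWB⟩ := exists_eventually_not_subset_liminf_union hB hanti
  exists_separates_of_eventually_not_subset _ hW hWB

theorem noInfAC_iff_not_exists_separates (h𝓕 : ∀ S ∈ 𝓕, IsFGLower S) :
    NoInfAC 𝓕 ↔ ¬ ∃ C : ℕ → Set Q, ∃ x : ℕ → Q, (∀ k, C k ∈ 𝓕) ∧ Separates x C := by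
  refine ⟨fun h ⟨C, x, hC, hx⟩ => hx.not_noInfAC hC h, fun h hA => h ?_⟩
  obtain ⟨A, hA𝓕, hinf, hanti⟩ := hA
  let e := hinf.natEmbedding A
  obtain ⟨n, x, hx⟩ := exists_separates_of_pairwise_not_subset (B := fun m => (e m : Set Q))
    (fun m => h𝓕 _ (hA𝓕 (e m).2))
    fun i j hij => hanti (e i).2 (e j).2 fun h => hij (e.injective (Subtype.ext h))
  exact ⟨fun k => e (n k), x, fun k => hA𝓕 (e (n k)).2, hx⟩

theorem noInfAC_iff_noInfAC_finUnions (h𝓕 : ∀ S ∈ 𝓕, IsFGLower S) :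
    NoInfAC 𝓕 ↔ NoInfAC (finUnions 𝓕) := by
  rw [noInfAC_iff_not_exists_separates h𝓕,
    noInfAC_iff_not_exists_separates fun _ => isFGLower_of_mem_finUnions h𝓕]
  refine not_congr ⟨fun ⟨C, x, hC, hx⟩ => ⟨C, x, fun k => subset_finUnions (hC k), hx⟩,
    fun ⟨C, x, hC, hx⟩ => ?_⟩
  obtain ⟨S, hS, hxS⟩ :=
    hx.exists_of_forall_mem_arbUnions fun k => finUnions_subset_arbUnions (hC k)
  exact ⟨S, x, hS, hxS⟩

end FGFamilies

/-- for a well-founded poset `Q` and a family `𝓕` of finitely generated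
initial segments: (1) `𝓕` has no infinite antichain ↔ (2) `𝓕^{<ω}` is wqo ↔
(6) `[ω]^{<ω}` does not embed into `𝓕^{<ω}` ↔ (7) `𝓕^∪` is well-founded. -/
theorem stmt_12 {Q : Type*} [PartialOrder Q]
    (hQ : WellFounded ((· < ·) : Q → Q → Prop)) (𝓕 : Set (Set Q))
    (h𝓕 : ∀ S ∈ 𝓕, ∃ F : Finset Q, S = {x | ∃ y ∈ F, x ≤ y}) :
    (NoInfAC 𝓕 ↔ (WFOn (finUnions 𝓕) ∧ NoInfAC (finUnions 𝓕))) ∧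
    (NoInfAC 𝓕 ↔ ¬ ∃ g : FinSets ℕ → Set Q,
        (∀ a, g a ∈ finUnions 𝓕) ∧ ∀ a b, a ≤ b ↔ g a ⊆ g b) ∧
    (NoInfAC 𝓕 ↔ WFOn (arbUnions 𝓕)) := by
  have : WellFoundedLT Q := ⟨hQ⟩
  have hfg : ∀ S ∈ 𝓕, IsFGLower S := h𝓕
  have hfin := noInfAC_iff_noInfAC_finUnions hfg
  have hsep := noInfAC_iff_not_exists_separates hfg
  have hwf : (finUnions 𝓕).IsWF :=
    isWF_setOf_isFGLower.mono fun _ => isFGLower_of_mem_finUnions hfg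
  refine ⟨⟨fun h => ⟨wfOn_iff_isWF.2 hwf, hfin.1 h⟩, fun h => hfin.2 h.2⟩, ⟨?_, ?_⟩, ?_⟩
  · rintro h ⟨g, hg𝓕, hg⟩
    exact not_noInfAC_of_finSets_embedding hg𝓕 hg (hfin.1 h)
  · exact fun h => hsep.2 fun ⟨C, x, hC, hx⟩ => h (hx.exists_finSets_embedding hC)
  rw [wfOn_iff_isWF]
  refine ⟨fun h => isWF_arbUnions_of_isPWO ((hwf.mono subset_finUnions).isPWO_of_noInfAC h),
    fun h => hsep.2 fun ⟨C, x, hC, hx⟩ => hx.not_isWF_arbUnions hC h⟩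
end

section
/- Every join-subsemilattice P of [ω]^{<ω} either contains [ω]^{<ω} as a join-subsemilattice or is well-quasi-ordered; in the latter case J(P) is well-founded. -/
/-!
If `P` has no infinite antichain, it is a well-quasi-order, since `<` is well-founded on finite
sets; in a well-quasi-order the lower sets, in particular the ideals, admit no infinite strictly
descending chain (points `p k ∈ I k \ I (k+1)` would contain a pair `p m ≤ p n`, `m < n`).

Otherwise let `(a i)` be an infinite antichain in `P` and `L` its limit along a nonprincipal
ultrafilter. No `a i` is contained in `L`: otherwise, `a i` being finite, almost every `a j`
would contain it. Hence one can choose inductively sets `c k = a (n k)` and points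
`x k ∈ c k \ L` lying in no other `c l`; then `S ↦ c 0 ∪ ⋃ i ∈ S, c (i + 1)` embeds `[ω]^{<ω}`
into `P` as a join-semilattice.
-/

namespace FinSets

variable {α : Type*}

instance : WellFoundedLT (FinSets α) :=
  StrictMono.wellFoundedLT (f := fun S : FinSets α => S.1.ncard) fun _ T h =>
    Set.ncard_lt_ncard h T.2

theorem val_sup' {ι : Type*} {t : Finset ι} (ht : t.Nonempty) (c : ι → FinSets α) :
    (t.sup' ht c).1 = ⋃ i ∈ t, (c i).1 := by
  rw [Finset.apply_sup'_eq_sup'_comp ht (fun S : FinSets α => S.1) fun _ _ => rfl,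
    Finset.sup'_eq_sup, Finset.sup_set_eq_biUnion]
  rfl

noncomputable def toFinset (S : FinSets α) : Finset α := S.2.toFinset

@[simp]
theorem mem_toFinset {S : FinSets α} {x : α} : x ∈ S.toFinset ↔ x ∈ S.1 :=
  Set.Finite.mem_toFinset _

theorem toFinset_sup [DecidableEq α] (S T : FinSets α) :
    (S ⊔ T).toFinset = S.toFinset ∪ T.toFinset := by
  ext x
  simp only [mem_toFinset, Finset.mem_union]
  rfl

end FinSets

open Finset in
theorem exists_finSets_embedding_of_independent {β : Type*} [SemilatticeSup β] {P : Set β}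
    (hP : ∀ a ∈ P, ∀ b ∈ P, a ⊔ b ∈ P) (c : ℕ → β) (hcP : ∀ i, c i ∈ P)
    (hc : ∀ i (t : Finset ℕ) (ht : t.Nonempty), c i ≤ t.sup' ht c → i ∈ t) :
    ∃ f : FinSets ℕ → β, Function.Injective f ∧ (∀ a, f a ∈ P) ∧
      ∀ a b, f (a ⊔ b) = f a ⊔ f b := by
  -- `c 0` is a common base point, so that `∅` also has an image in `P`.
  let idx (S : FinSets ℕ) : Finset ℕ := insert 0 (S.toFinset.image Nat.succ)
  have succ_mem_idx {S : FinSets ℕ} {i : ℕ} : i + 1 ∈ idx S ↔ i ∈ S.1 := by simp [idx]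
  have idx_sup (S T : FinSets ℕ) : idx (S ⊔ T) = idx S ∪ idx T := by
    simp only [idx]
    rw [FinSets.toFinset_sup, image_union, insert_union_distrib]
  let f (S : FinSets ℕ) : β := (idx S).sup' (insert_nonempty _ _) c
  have le_f_iff {S : FinSets ℕ} {i : ℕ} : c (i + 1) ≤ f S ↔ i ∈ S.1 :=
    ⟨fun h => succ_mem_idx.1 (hc _ _ _ h), fun h => le_sup' c (succ_mem_idx.2 h)⟩
  refine ⟨f, fun S T hST => ?_, fun S => sup'_mem P hP _ _ c fun i _ => hcP i, fun S T => ?_⟩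
  · refine le_antisymm (fun i hi => ?_) (fun i hi => ?_)
    · exact le_f_iff.1 (hST ▸ le_f_iff.2 hi)
    · exact le_f_iff.1 (hST.symm ▸ le_f_iff.2 hi)
  · rw [← sup'_union]
    exact sup'_congr _ (idx_sup S T) fun _ _ => rfl

section Separation

open Filter

variable {ι α : Type*} [Infinite ι] {a : ι → Set α}

theorem not_subset_hyperfilter_limit (hfin : ∀ i, (a i).Finite)
    (hanti : Pairwise fun i j => ¬ a i ⊆ a j) (i : ι) :
    ¬ a i ⊆ {x | ∀ᶠ j in hyperfilter ι, x ∈ a j} := by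
  intro hi
  have hsub : ∀ᶠ j in hyperfilter ι, a i ⊆ a j := (hfin i).eventually_all.2 hi
  have hne : ∀ᶠ j in hyperfilter ι, j ≠ i :=
    (eventually_cofinite_ne i).filter_mono hyperfilter_le_cofinite
  obtain ⟨j, hij, hji⟩ := (hsub.and hne).exists
  exact hanti hji.symm hij

theorem exists_seq_private_points (hfin : ∀ i, (a i).Finite)
    (hanti : Pairwise fun i j => ¬ a i ⊆ a j) :
    ∃ (n : ℕ → ι) (x : ℕ → α), ∀ i j, x i ∈ a (n j) ↔ i = j := by
  set L := {x | ∀ᶠ j in hyperfilter ι, x ∈ a j}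
  let sep (p q : ι × α) : Prop := p.2 ∉ a q.1 ∧ q.2 ∉ a p.1
  have : Std.Symm sep := ⟨fun _ _ h => h.symm⟩
  obtain ⟨f, hfP, hf⟩ := exists_seq_of_forall_finset_exists' (fun p => p.2 ∈ a p.1 ∧ p.2 ∉ L)
    sep fun s hs => by
      set F := ⋃ p ∈ s, a p.1
      have hF : F.Finite := s.finite_toSet.biUnion fun p _ => hfin p.1
      have havoid : ∀ᶠ j in hyperfilter ι, ∀ y ∈ F \ L, y ∉ a j :=
        hF.sdiff.eventually_all.2 fun y hy => Ultrafilter.eventually_not.2 hy.2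
      obtain ⟨j, hj⟩ := havoid.exists
      obtain ⟨y, hya, hyL⟩ := Set.not_subset.1 (not_subset_hyperfilter_limit hfin hanti j)
      refine ⟨(j, y), ⟨hya, hyL⟩, fun p hp => ⟨fun h => ?_, fun h => ?_⟩⟩
      · exact hj p.2 ⟨Set.mem_biUnion hp (hs p hp).1, (hs p hp).2⟩ h
      · exact hj y ⟨Set.mem_biUnion hp h, hyL⟩ hya
  refine ⟨fun i => (f i).1, fun i => (f i).2, fun i j => ⟨fun h => ?_, ?_⟩⟩
  · by_contra hij
    exact (hf hij).1 h
  · rintro rfl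
    exact (hfP i).1

end Separation

theorem FinSets.exists_embedding_of_infinite_antichain {P : Set (FinSets ℕ)}
    (hP : ∀ a ∈ P, ∀ b ∈ P, a ⊔ b ∈ P) {A : Set (FinSets ℕ)} (hAP : A ⊆ P)
    (hAinf : A.Infinite) (hA : IsAntichain (· ≤ ·) A) :
    ∃ f : FinSets ℕ → FinSets ℕ, Function.Injective f ∧ (∀ a, f a ∈ P) ∧
      ∀ a b, f (a ⊔ b) = f a ⊔ f b := by
  have : Infinite A := hAinf.to_subtype
  obtain ⟨n, x, hx⟩ := exists_seq_private_points (a := fun S : A => S.1.1) (fun S => S.1.2)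
    fun S T hST => hA S.2 T.2 (Subtype.coe_ne_coe.2 hST)
  refine exists_finSets_embedding_of_independent hP (fun i => (n i).1) (fun i => hAP (n i).2)
    fun i t ht hle => ?_
  have hxi : x i ∈ ⋃ j ∈ t, ((n j).1).1 := FinSets.val_sup' ht _ ▸ hle ((hx i i).2 rfl)
  obtain ⟨j, hj, hxj⟩ := Set.mem_iUnion₂.1 hxi
  exact (hx i j).1 hxj ▸ hj

section WellQuasiOrder

variable {α : Type*} [Preorder α]

theorem wellQuasiOrderedLE_of_not_exists_infinite_antichain [WellFoundedLT α] {P : Set α}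
    (hP : ¬ ∃ A ⊆ P, A.Infinite ∧ IsAntichain (· ≤ ·) A) : WellQuasiOrderedLE P := by
  refine wellQuasiOrderedLE_iff.2 ⟨inferInstance, fun s hs => ?_⟩
  by_contra hinf
  refine hP ⟨Subtype.val '' s, by simp, ?_, hs.image _ fun _ _ h => h⟩
  exact (Set.infinite_image_iff Subtype.val_injective.injOn).2 hinf

instance LowerSet.wellFoundedLT_of_wellQuasiOrderedLE [WellQuasiOrderedLE α] :
    WellFoundedLT (LowerSet α) := by
  refine ⟨wellFounded_iff_isEmpty_descending_chain.2 ⟨fun ⟨I, hI⟩ => ?_⟩⟩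
  choose p hp hp' using fun k => Set.exists_of_ssubset (hI k)
  obtain ⟨m, n, hmn, hle⟩ := wellQuasiOrdered_le p
  have hsub : I n ≤ I (m + 1) := (strictAnti_nat_of_succ_lt hI).antitone hmn
  exact hp' m ((I (m + 1)).lower hle (hsub (hp n)))

theorem wellFounded_lt_isIdeal [WellQuasiOrderedLE α] :
    WellFounded ((· < ·) : {I : Set α // IsIdeal I} → {I : Set α // IsIdeal I} → Prop) :=
  let toLowerSet (I : {I : Set α // IsIdeal I}) : LowerSet α := ⟨I.1, fun _ _ h => I.2.2.1 h⟩
  (StrictMono.wellFoundedLT (f := toLowerSet) fun _ _ h => h).wf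

end WellQuasiOrder

/-- every join-subsemilattice `P` of `[ω]^{<ω}` either contains `[ω]^{<ω}` as a
join-subsemilattice or is well-quasi-ordered, in which case `J(P)` is well-founded. -/
theorem stmt_13 (P : Set (FinSets ℕ)) (hP : ∀ a ∈ P, ∀ b ∈ P, a ⊔ b ∈ P) :
    (∃ f : FinSets ℕ → FinSets ℕ, Function.Injective f ∧ (∀ a, f a ∈ P) ∧
        ∀ a b, f (a ⊔ b) = f a ⊔ f b) ∨
      ((WellFounded ((· < ·) : ↥P → ↥P → Prop) ∧
          ¬ ∃ A ⊆ P, A.Infinite ∧ IsAntichain (· ≤ ·) A) ∧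
        WellFounded ((· < ·) : {I : Set ↥P // IsIdeal I} → {I : Set ↥P // IsIdeal I} → Prop)) := by
  by_cases hA : ∃ A ⊆ P, A.Infinite ∧ IsAntichain (· ≤ ·) A
  · obtain ⟨A, hAP, hAinf, hA⟩ := hA
    exact Or.inl (FinSets.exists_embedding_of_infinite_antichain hP hAP hAinf hA)
  · have : WellQuasiOrderedLE P := wellQuasiOrderedLE_of_not_exists_infinite_antichain hA
    exact Or.inr ⟨⟨wellFounded_lt, hA⟩, wellFounded_lt_isIdeal⟩
end

section
/- Let P be a join-semilattice with least element such that for every x ∈ P the set φ_Δ(x) of completely meet-irreducible ideals of P not containing x is finite. Then P embeds as a join-subsemilattice into [E]^{<ω} for some set E, and conversely any join-semilattice embedding as a join-subsemilattice into some [E]^{<ω} has this property. -/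
universe u

/-- A completely meet-irreducible ideal: an ideal distinct from the intersection of the
ideals strictly containing it. -/
def CMIdeal {P : Type*} [Preorder P] (I : Set P) : Prop :=
  IsIdeal I ∧ I ≠ ⋂₀ {J : Set P | IsIdeal J ∧ I ⊂ J}

/-!
A maximal ideal containing `y` and omitting `x` is completely meet-irreducible, so sending `x` to
the set of completely meet-irreducible ideals omitting it is injective; it turns joins into unions
because `x ⊔ y ∈ I ↔ x ∈ I ∧ y ∈ I` for an ideal `I`.

Conversely, let `F : P → [E]^{<ω}` be a join-embedding and `I` completely meet-irreducible, with
`p ∉ I` lying in every ideal strictly above `I`. Since `F p` is finite and `I` is directed, `F p`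
is not covered by the sets `F a`, `a ∈ I`: pick `e ∈ F p` outside all of them. For `z ∉ I` the
ideal generated by `I` and `z` contains `p`, so `p ≤ a ⊔ z` for some `a ∈ I`, whence `e ∈ F z`.
Hence `I = {z | e ∉ F z}`, and the ideals omitting `x` are indexed by points of the finite set
`F x`.
-/

namespace IsIdeal

section Preorder
variable {α : Type*} [Preorder α]

theorem directedOn {I : Set α} (hI : IsIdeal I) : DirectedOn (· ≤ ·) I := hI.2.2

theorem Iic (y : α) : IsIdeal (Set.Iic y) :=
  ⟨⟨y, le_rfl⟩, fun _ _ hab hb => hab.trans hb, fun _ ha _ hb => ⟨y, le_rfl, ha, hb⟩⟩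

theorem sUnion {c : Set (Set α)} (hc : IsChain (· ⊆ ·) c) (hne : c.Nonempty)
    (hideal : ∀ I ∈ c, IsIdeal I) : IsIdeal (⋃₀ c) := by
  refine ⟨?_, ?_, ?_⟩
  · obtain ⟨I, hI⟩ := hne
    exact (hideal I hI).1.mono (Set.subset_sUnion_of_mem hI)
  · rintro a b hab ⟨I, hI, hbI⟩
    exact ⟨I, hI, (hideal I hI).2.1 hab hbI⟩
  · rintro a ⟨I, hI, haI⟩ b ⟨J, hJ, hbJ⟩
    obtain ⟨K, hK, hIK, hJK⟩ := hc.directedOn I hI J hJ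
    obtain ⟨z, hz, haz, hbz⟩ := (hideal K hK).2.2 a (hIK haI) b (hJK hbJ)
    exact ⟨z, ⟨K, hK, hz⟩, haz, hbz⟩

end Preorder

variable {P : Type*} [SemilatticeSup P] {I : Set P}

theorem sup_mem_iff (hI : IsIdeal I) {x y : P} : x ⊔ y ∈ I ↔ x ∈ I ∧ y ∈ I := by
  refine ⟨fun h => ⟨hI.2.1 le_sup_left h, hI.2.1 le_sup_right h⟩, fun ⟨hx, hy⟩ => ?_⟩
  obtain ⟨z, hz, hxz, hyz⟩ := hI.2.2 x hx y hy
  exact hI.2.1 (sup_le hxz hyz) hz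

/-- The ideal generated by `I` and `z`. -/
theorem setOf_le_sup (hI : IsIdeal I) (z : P) : IsIdeal {w : P | ∃ a ∈ I, w ≤ a ⊔ z} := by
  refine ⟨?_, ?_, ?_⟩
  · obtain ⟨a, ha⟩ := hI.1
    exact ⟨a, a, ha, le_sup_left⟩
  · rintro u v huv ⟨a, ha, hv⟩
    exact ⟨a, ha, huv.trans hv⟩
  · rintro u ⟨a, ha, hu⟩ v ⟨b, hb, hv⟩
    obtain ⟨c, hc, hac, hbc⟩ := hI.2.2 a ha b hb
    exact ⟨c ⊔ z, ⟨c, hc, le_rfl⟩, hu.trans (sup_le_sup_right hac z),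
      hv.trans (sup_le_sup_right hbc z)⟩

end IsIdeal

section SemilatticeSup
variable {P : Type*} [SemilatticeSup P]

theorem exists_cmIdeal_mem_notMem {x y : P} (h : ¬ x ≤ y) :
    ∃ I : Set P, CMIdeal I ∧ y ∈ I ∧ x ∉ I := by
  obtain ⟨M, -, ⟨hM, hyM, hxM⟩, hMmax⟩ :=
    zorn_subset_nonempty {I | IsIdeal I ∧ y ∈ I ∧ x ∉ I}
    (fun c hcS hc hne => ⟨⋃₀ c,
      ⟨IsIdeal.sUnion hc hne fun I hI => (hcS hI).1,
        hne.elim fun I hI => ⟨I, hI, (hcS hI).2.1⟩,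
        fun ⟨I, hI, hxI⟩ => (hcS hI).2.2 hxI⟩,
      fun _ => Set.subset_sUnion_of_mem⟩)
    (Set.Iic y) ⟨IsIdeal.Iic y, le_rfl, h⟩
  refine ⟨M, ⟨hM, fun heq => hxM ?_⟩, hyM, hxM⟩
  -- by maximality, every ideal strictly above `M` contains `x`
  rw [heq]
  rintro J ⟨hJ, hMJ⟩
  by_contra hxJ
  exact hMJ.not_subset (hMmax ⟨hJ, hMJ.subset hyM, hxJ⟩ hMJ.subset)

theorem CMIdeal.exists_notMem_forall_le_sup {I : Set P} (hI : CMIdeal I) :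
    ∃ p ∉ I, ∀ z ∉ I, ∃ a ∈ I, p ≤ a ⊔ z := by
  have hsub : I ⊆ ⋂₀ {J : Set P | IsIdeal J ∧ I ⊂ J} := fun a ha J hJ => hJ.2.subset ha
  obtain ⟨p, hp, hpI⟩ := Set.exists_of_ssubset (hsub.ssubset_of_ne hI.2)
  refine ⟨p, hpI, fun z hz =>
    hp _ ⟨hI.1.setOf_le_sup z, fun a ha => ⟨a, ha, le_sup_left⟩, ?_⟩⟩
  obtain ⟨a, ha⟩ := hI.1.1
  exact fun hback => hz (hback ⟨a, ha, le_sup_right⟩)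

def cmIdealsOmitting (x : P) : Set {I : Set P // CMIdeal I} := {I | x ∉ I.1}

theorem cmIdealsOmitting_subset_iff {x y : P} :
    cmIdealsOmitting x ⊆ cmIdealsOmitting y ↔ x ≤ y := by
  refine ⟨fun hsub => ?_, fun hxy I hxI hyI => hxI (I.2.1.2.1 hxy hyI)⟩
  by_contra h
  obtain ⟨I, hI, hyI, hxI⟩ := exists_cmIdeal_mem_notMem h
  exact hsub (a := ⟨I, hI⟩) hxI hyI

theorem cmIdealsOmitting_injective : Function.Injective (cmIdealsOmitting (P := P)) :=
  fun _ _ h => le_antisymm (cmIdealsOmitting_subset_iff.1 h.subset)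
    (cmIdealsOmitting_subset_iff.1 h.superset)

theorem cmIdealsOmitting_sup (x y : P) :
    cmIdealsOmitting (x ⊔ y) = cmIdealsOmitting x ∪ cmIdealsOmitting y := by
  ext I
  simp only [cmIdealsOmitting, Set.mem_ofPred_eq, Set.mem_union, I.2.1.sup_mem_iff, not_and_or]

theorem cmIdealsOmitting_finite {x : P} (hx : {I : Set P | CMIdeal I ∧ x ∉ I}.Finite) :
    (cmIdealsOmitting x).Finite :=
  (hx.preimage Subtype.val_injective.injOn).subset fun I hI => ⟨I.2, hI⟩

variable {E : Type*} {F : P → Set E}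

theorem monotone_of_map_sup_s15 (hsup : ∀ x y, F (x ⊔ y) = F x ∪ F y) : Monotone F :=
  fun x y h => by
    rw [← sup_eq_right.2 h, hsup]
    exact Set.subset_union_left

theorem le_of_map_sup_of_subset (hsup : ∀ x y, F (x ⊔ y) = F x ∪ F y)
    (hinj : Function.Injective F) {x y : P} (h : F x ⊆ F y) : x ≤ y :=
  sup_eq_right.1 (hinj (by rw [hsup, Set.union_eq_right.2 h]))

theorem IsIdeal.exists_mem_subset_of_subset_biUnion {I : Set P} (hI : IsIdeal I)
    (hF : Monotone F) {s : Set E} (hs : s.Finite) (hsub : s ⊆ ⋃ a ∈ I, F a) :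
    ∃ b ∈ I, s ⊆ F b := by
  rw [← hs.coe_toFinset] at hsub ⊢
  exact hI.directedOn.mono (fun _ _ h => hF h)
    |>.exists_mem_subset_of_finset_subset_biUnion hI.1 hsub

theorem CMIdeal.exists_eq_setOf_notMem (hsup : ∀ x y, F (x ⊔ y) = F x ∪ F y)
    (hinj : Function.Injective F) (hfin : ∀ x, (F x).Finite) {I : Set P} (hI : CMIdeal I) :
    ∃ e, I = {z | e ∉ F z} := by
  have hF := monotone_of_map_sup_s15 hsup
  obtain ⟨p, hpI, hp⟩ := hI.exists_notMem_forall_le_sup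
  have hpF : ¬ F p ⊆ ⋃ a ∈ I, F a := fun hcov => by
    obtain ⟨b, hb, hpb⟩ := hI.1.exists_mem_subset_of_subset_biUnion hF (hfin p) hcov
    exact hpI (hI.1.2.1 (le_of_map_sup_of_subset hsup hinj hpb) hb)
  obtain ⟨e, hep, heI⟩ := Set.not_subset.1 hpF
  simp only [Set.mem_iUnion, not_exists] at heI
  refine ⟨e, Set.ext fun z => ⟨fun hz => heI z hz, fun hez => by_contra fun hz => hez ?_⟩⟩
  obtain ⟨a, ha, hpa⟩ := hp z hz
  have := hF hpa hep
  rw [hsup] at this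
  exact this.resolve_left (heI a ha)

theorem finite_setOf_cmIdeal_notMem (hsup : ∀ x y, F (x ⊔ y) = F x ∪ F y)
    (hinj : Function.Injective F) (hfin : ∀ x, (F x).Finite) (x : P) :
    {I : Set P | CMIdeal I ∧ x ∉ I}.Finite := by
  refine ((hfin x).image fun e => {z | e ∉ F z}).subset ?_
  rintro I ⟨hI, hxI⟩
  obtain ⟨e, rfl⟩ := hI.exists_eq_setOf_notMem hsup hinj hfin
  exact ⟨e, by simpa using hxI, rfl⟩

end SemilatticeSup

theorem stmt_15_general {P : Type u} [SemilatticeSup P] :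
    (∀ x : P, {I : Set P | CMIdeal I ∧ x ∉ I}.Finite) ↔
      ∃ E : Type u, JoinEmbeds P (FinSets E) := by
  constructor
  · intro hfin
    refine ⟨{I : Set P // CMIdeal I},
      fun x => ⟨cmIdealsOmitting x, cmIdealsOmitting_finite (hfin x)⟩,
      fun x y h => cmIdealsOmitting_injective (congrArg Subtype.val h),
      fun x y => Subtype.ext (cmIdealsOmitting_sup x y)⟩
  · rintro ⟨E, f, hinj, hsup⟩
    exact finite_setOf_cmIdeal_notMem (F := fun x => (f x).1)
      (fun x y => congrArg Subtype.val (hsup x y)) (Subtype.val_injective.comp hinj)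
      fun x => (f x).2

/-- a join-semilattice `P` with least element embeds as a join-subsemilattice
into some `[E]^{<ω}` iff for every `x ∈ P` only finitely many completely meet-irreducible
ideals omit `x`. -/
theorem stmt_15 {P : Type u} [SemilatticeSup P] [OrderBot P] :
    (∀ x : P, {I : Set P | CMIdeal I ∧ x ∉ I}.Finite) ↔
      ∃ E : Type u, JoinEmbeds P (FinSets E) :=
  stmt_15_general
end

section
/- Let P be a well-founded poset containing an infinite antichain. Then P contains an infinite antichain A such that: (1) for every x ∈ P, either x ≥ y for some y ∈ A, or x < y for all but finitely many y ∈ A; and (2) P \ ↑A is well-quasi-ordered, where ↑A = {x : x ≥ y for some y ∈ A}. -/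
/-!
Call an upper set finitely generated if it is the upper closure of a finite set. The upper
closure of an infinite antichain is not finitely generated, and the upper sets that are not
finitely generated are closed under unions of chains, so Zorn's lemma gives a maximal one, `m`.
As `P` is well-founded, `m` is the upper closure of its set `A` of minimal elements, an antichain
which is infinite because `m` is not finitely generated. By maximality, adjoining to `m` the upper
closure of anything outside `m` gives a finitely generated upper set: for `↑x` this shows that
only finitely many `y ∈ A` fail `x < y`, and for `↑B`, with `B` an antichain outside `m`, that `B`
is finite.
-/

open Set

section

variable {P : Type*} [PartialOrder P]

def IsFGUpperSet (S : Set P) : Prop := ∃ F : Set P, F.Finite ∧ S = upperClosure F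

theorem IsAntichain.finite_of_subset_upperClosure {B F : Set P} (hB : IsAntichain (· ≤ ·) B)
    (hF : F.Finite) (hBF : B ⊆ upperClosure F) (hFB : F ⊆ upperClosure B) : B.Finite := by
  have hg : ∀ b ∈ B, ∃ f ∈ F, f ≤ b := fun b hb => mem_upperClosure.1 (hBF hb)
  choose! g hgF hgb using hg
  -- `g` is injective on `B`: an element of `B` below `g a = g b` is below both `a` and `b`.
  refine Finite.of_injOn (fun b hb => hgF b hb) (fun a ha b hb hab => ?_) hF
  obtain ⟨c, hc, hcg⟩ := mem_upperClosure.1 (hFB (hgF a ha))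
  have hca : c = a := hB.eq hc ha (hcg.trans (hgb a ha))
  have hcb : c = b := hB.eq hc hb (hcg.trans (hab ▸ hgb b hb))
  exact hca.symm.trans hcb

theorem IsAntichain.not_isFGUpperSet_upperClosure {B : Set P} (hB : IsAntichain (· ≤ ·) B)
    (hinf : B.Infinite) : ¬ IsFGUpperSet (upperClosure B : Set P) := by
  rintro ⟨F, hF, hBF⟩
  refine hinf (hB.finite_of_subset_upperClosure hF ?_ ?_)
  · rw [← hBF]; exact subset_upperClosure
  · rw [hBF]; exact subset_upperClosure

theorem IsChain.not_isFGUpperSet_sUnion {c : Set (Set P)} (hc : IsChain (· ⊆ ·) c)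
    (hne : c.Nonempty) (hnfg : ∀ S ∈ c, IsUpperSet S ∧ ¬ IsFGUpperSet S) :
    ¬ IsFGUpperSet (⋃₀ c) := by
  rintro ⟨F, hF, hcF⟩
  obtain ⟨S, hS, hFS⟩ := hc.directedOn.exists_mem_subset_of_finite_of_subset_sUnion hne hF
    (hcF ▸ subset_upperClosure)
  exact (hnfg S hS).2 ⟨F, hF, ((subset_sUnion_of_mem hS).trans hcF.subset).antisymm
    (upperClosure_min hFS (hnfg S hS).1)⟩

theorem exists_maximal_not_isFGUpperSet {A : Set P} (hA : IsAntichain (· ≤ ·) A)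
    (hinf : A.Infinite) : ∃ m : Set P, Maximal (fun S => IsUpperSet S ∧ ¬ IsFGUpperSet S) m := by
  obtain ⟨m, -, hm⟩ := zorn_subset_nonempty {S : Set P | IsUpperSet S ∧ ¬ IsFGUpperSet S}
    (fun c hcS hc hne => ⟨⋃₀ c, ⟨isUpperSet_sUnion fun S hS => (hcS hS).1,
      hc.not_isFGUpperSet_sUnion hne hcS⟩, fun _ => subset_sUnion_of_mem⟩)
    _ ⟨(upperClosure A).upper, hA.not_isFGUpperSet_upperClosure hinf⟩
  exact ⟨m, hm⟩

theorem IsUpperSet.upperClosure_setOf_minimal [WellFoundedLT P] {S : Set P} (hS : IsUpperSet S) :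
    (upperClosure {a | Minimal (· ∈ S) a} : Set P) = S := by
  refine (upperClosure_min (fun _ ha => ha.1) hS).antisymm fun x hx => ?_
  obtain ⟨a, hax, ha⟩ := exists_minimal_le_of_wellFoundedLT _ x hx
  exact mem_upperClosure.2 ⟨a, ha, hax⟩

namespace Maximal

variable {m : Set P}

theorem isFGUpperSet_union_upperClosure
    (hm : Maximal (fun S => IsUpperSet S ∧ ¬ IsFGUpperSet S) m) {X : Set P} (hX : ¬ X ⊆ m) :
    IsFGUpperSet (m ∪ upperClosure X) := by
  by_contra hfg
  have hle := hm.2 ⟨hm.1.1.union (upperClosure X).upper, hfg⟩ subset_union_left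
  exact hX fun x hx => hle (Or.inr (subset_upperClosure hx))

theorem finite_setOf_minimal_not_lt
    (hm : Maximal (fun S => IsUpperSet S ∧ ¬ IsFGUpperSet S) m) {x : P} (hx : x ∉ m) :
    {y | Minimal (· ∈ m) y ∧ ¬ x < y}.Finite := by
  obtain ⟨F, hF, hmF⟩ := hm.isFGUpperSet_union_upperClosure (X := {x}) (by simpa)
  refine hF.subset fun y ⟨hy, hxy⟩ => ?_
  obtain ⟨f, hfF, hfy⟩ := mem_upperClosure.1 (hmF ▸ Or.inl hy.1 : y ∈ (upperClosure F : Set P))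
  rcases (hmF ▸ subset_upperClosure hfF : f ∈ m ∪ upperClosure {x}) with hfm | hxf
  · rwa [hy.eq_of_le hfm hfy] at hfF
  · have hxy' : x ≤ y := (mem_upperClosure.1 hxf).elim fun _ ⟨hx', h⟩ => hx' ▸ h.trans hfy
    exact absurd (hxy'.lt_of_ne fun h => hx (h ▸ hy.1)) hxy

theorem finite_of_isAntichain_of_disjoint
    (hm : Maximal (fun S => IsUpperSet S ∧ ¬ IsFGUpperSet S) m) {B : Set P}
    (hB : IsAntichain (· ≤ ·) B) (hBm : Disjoint B m) : B.Finite := by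
  rcases B.eq_empty_or_nonempty with rfl | ⟨b, hb⟩
  · exact finite_empty
  obtain ⟨F, hF, hmF⟩ := hm.isFGUpperSet_union_upperClosure
    fun h => disjoint_left.1 hBm hb (h hb)
  refine hB.finite_of_subset_upperClosure (hF.inter_of_left (upperClosure B))
    (fun b hb => ?_) fun f hf => hf.2
  obtain ⟨f, hfF, hfb⟩ := mem_upperClosure.1
    (hmF ▸ Or.inr (subset_upperClosure hb) : b ∈ (upperClosure F : Set P))
  rcases (hmF ▸ subset_upperClosure hfF : f ∈ m ∪ upperClosure B) with hfm | hfB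
  · exact absurd (hm.1.1 hfb hfm) (disjoint_left.1 hBm hb)
  · exact mem_upperClosure.2 ⟨f, ⟨hfF, hfB⟩, hfb⟩

end Maximal

end

/-- a well-founded poset with an infinite antichain contains an infinite
antichain `A` such that every `x` is above a member of `A` or below all but finitely many
members of `A`, and `P \\ ↑A` is well-quasi-ordered. -/
theorem stmt_17 {P : Type*} [PartialOrder P]
    (hwf : WellFounded ((· < ·) : P → P → Prop))
    (h : ∃ A : Set P, A.Infinite ∧ IsAntichain (· ≤ ·) A) :
    ∃ A : Set P, A.Infinite ∧ IsAntichain (· ≤ ·) A ∧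
      (∀ x : P, (∃ y ∈ A, y ≤ x) ∨ {y ∈ A | ¬ x < y}.Finite) ∧
      ((∀ C ⊆ {x : P | ∀ y ∈ A, ¬ y ≤ x}, C.Nonempty → ∃ m ∈ C, ∀ b ∈ C, ¬ b < m) ∧
        ¬ ∃ B ⊆ {x : P | ∀ y ∈ A, ¬ y ≤ x}, B.Infinite ∧ IsAntichain (· ≤ ·) B) := by
  have : WellFoundedLT P := ⟨hwf⟩
  obtain ⟨A₀, hA₀, hA₀anti⟩ := h
  obtain ⟨m, hm⟩ := exists_maximal_not_isFGUpperSet hA₀anti hA₀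
  set A := {a | Minimal (· ∈ m) a}
  have hmA : m = upperClosure A := hm.1.1.upperClosure_setOf_minimal.symm
  have hmem : ∀ x, x ∈ m ↔ ∃ y ∈ A, y ≤ x := fun x => by rw [hmA]; exact mem_upperClosure
  refine ⟨A, fun hfin => hm.1.2 ⟨A, hfin, hmA⟩, setOfPred_minimal_antichain _, fun x => ?_,
    fun C _ hC => hwf.has_min C hC, ?_⟩
  · by_cases hx : x ∈ m
    · exact Or.inl ((hmem x).1 hx)
    · exact Or.inr (hm.finite_setOf_minimal_not_lt hx)
  · rintro ⟨B, hBA, hB, hBanti⟩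
    refine hB (hm.finite_of_isAntichain_of_disjoint hBanti (disjoint_left.2 fun b hb hbm => ?_))
    obtain ⟨y, hy, hyb⟩ := (hmem b).1 hbm
    exact hBA hb y hy hyb
end

section
/- Let Δ be the set of pairs (i,j) with i < j ≤ ω, ordered by (i,j) ≤ (i',j') iff j ≤ i' or (i = i' and j ≤ j'), and let P be a meet-semilattice. Suppose f : Δ → P satisfies f(i,j) = f(i,ω) ∧ f(j,ω) for all i < j < ω. Then f is meet-preserving if and only if f is order-preserving, if and only if f(i,j) ≤ f(k,ω) for all i < j < k < ω, if and only if f(i,j) = f(i,k) ∧ f(j,k) for all i < j < k < ω. Moreover, such an f is injective if and only if f(i,j) < f(j,k) and f(i,j) < f(i,k) for all i < j < k < ω. -/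
/-!
Every element of `Δ` is either `(i,ω)` or `(i,j) = (i,ω) ⊓ (j,ω)`, and the elements `(k,ω)`
are meet-dense: `a ≤ b` as soon as every `(k,ω)` above `b` lies above `a`. So under the
hypothesis `f` is determined by `k ↦ f(k,ω)`, monotonicity only has to be tested against the
`(k,ω)`, and a monotone `f` preserves meets because the only meet of two incomparable elements
with first coordinates `i < i'` is `(i,i')`. For injectivity, the strict inequalities force
`f a ≤ f(k,ω) → a ≤ (k,ω)`, so `f a` recovers the set of `(k,ω)` above `a`, and hence `a`.
-/

/-- The poset `Δ`: pairs `(i,j)` with `i < j ≤ ω`, ordered by `(i,j) ≤ (i',j')` iff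
`j ≤ i'` or (`i = i'` and `j ≤ j'`). -/
def DeltaP : Type := {p : ℕ × WithTop ℕ // (p.1 : WithTop ℕ) < p.2}

instance : PartialOrder DeltaP where
  le a b := a.1.2 ≤ (b.1.1 : WithTop ℕ) ∨ (a.1.1 = b.1.1 ∧ a.1.2 ≤ b.1.2)
  le_refl a := Or.inr ⟨rfl, le_refl _⟩
  le_trans a b c hab hbc := by
    rcases hab with h1 | ⟨h1, h1'⟩ <;> rcases hbc with h2 | ⟨h2, h2'⟩
    · exact Or.inl (h1.trans (le_of_lt (lt_of_lt_of_le b.2 h2)))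
    · exact Or.inl (h2 ▸ h1)
    · exact Or.inl (h1'.trans h2)
    · exact Or.inr ⟨h1.trans h2, h1'.trans h2'⟩
  le_antisymm a b hab hba := by
    rcases hab with h1 | ⟨h1, h1'⟩
    · rcases hba with h2 | ⟨h2, h2'⟩
      · exact absurd ((a.2.trans_le h1).trans (b.2.trans_le h2)) (lt_irrefl _)
      · exact absurd ((h2 ▸ a.2 : ((b.1.1 : ℕ) : WithTop ℕ) < a.1.2).trans_le h1)
          (lt_irrefl _)
    · rcases hba with h2 | ⟨h2, h2'⟩
      · exact absurd ((h1 ▸ b.2 : ((a.1.1 : ℕ) : WithTop ℕ) < b.1.2).trans_le h2)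
          (lt_irrefl _)
      · exact Subtype.ext (Prod.ext h1 (le_antisymm h1' h2'))

/-- The element `(i,j)` of `Δ`, for `i < j < ω`. -/
def Dfin (i j : ℕ) (h : i < j) : DeltaP :=
  ⟨(i, (j : WithTop ℕ)), WithTop.coe_lt_coe.mpr h⟩

/-- The element `(i,ω)` of `Δ`. -/
def Dinf (i : ℕ) : DeltaP := ⟨(i, ⊤), WithTop.coe_lt_top i⟩

theorem isLeast_pair_of_le {α : Type*} [Preorder α] {a b : α} (h : a ≤ b) :
    IsLeast {a, b} a :=
  ⟨Set.mem_insert a {b}, by simp [lowerBounds, h]⟩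

theorem monotone_of_map_isGLB_pair {α β : Type*} [Preorder α] [SemilatticeInf β] {f : α → β}
    (hf : ∀ a b c : α, IsGLB {a, b} c → f c = f a ⊓ f b) : Monotone f :=
  fun a b hab => (hf a b a (isLeast_pair_of_le hab).isGLB).trans_le inf_le_right

namespace DeltaP

@[elab_as_elim]
theorem cases_Dinf_Dfin {motive : DeltaP → Prop} (inf : ∀ i, motive (Dinf i))
    (fin : ∀ i j (h : i < j), motive (Dfin i j h)) (a : DeltaP) : motive a := by
  obtain ⟨⟨i, j⟩, h⟩ := a
  induction j using WithTop.recTopCoe with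
  | top => exact inf i
  | coe j => exact fin i j (WithTop.coe_lt_coe.mp h)

theorem le_def {a b : DeltaP} :
    a ≤ b ↔ a.1.2 ≤ (b.1.1 : WithTop ℕ) ∨ (a.1.1 = b.1.1 ∧ a.1.2 ≤ b.1.2) := Iff.rfl

theorem le_Dinf_iff {a : DeltaP} {k : ℕ} : a ≤ Dinf k ↔ a.1.2 ≤ k ∨ a.1.1 = k := by
  rw [le_def]
  simp [Dinf]

theorem le_Dinf_fst (a : DeltaP) : a ≤ Dinf a.1.1 :=
  le_Dinf_iff.mpr (Or.inr rfl)

theorem le_Dfin_iff {a : DeltaP} {i j : ℕ} (h : i < j) :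
    a ≤ Dfin i j h ↔ a ≤ Dinf i ∧ a ≤ Dinf j := by
  rw [le_Dinf_iff, le_Dinf_iff, le_def]
  obtain ⟨⟨a₁, a₂⟩, ha⟩ := a
  simp only [Dfin]
  constructor
  · rintro (h₁ | ⟨rfl, h₂⟩)
    · exact ⟨Or.inl h₁, Or.inl (h₁.trans (WithTop.coe_le_coe.mpr h.le))⟩
    · exact ⟨Or.inr rfl, Or.inl h₂⟩
  · rintro ⟨h₁ | rfl, h₂ | rfl⟩
    · exact Or.inl h₁
    · exact Or.inl h₁
    · exact Or.inr ⟨rfl, h₂⟩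
    · exact absurd h (lt_irrefl _)

theorem Dfin_le_Dinf_left {i j : ℕ} (h : i < j) : Dfin i j h ≤ Dinf i :=
  ((le_Dfin_iff h).mp le_rfl).1

theorem Dfin_le_Dinf_right {i j : ℕ} (h : i < j) : Dfin i j h ≤ Dinf j :=
  ((le_Dfin_iff h).mp le_rfl).2

theorem le_of_forall_le_Dinf {a b : DeltaP} (h : ∀ k, b ≤ Dinf k → a ≤ Dinf k) :
    a ≤ b := by
  induction b using cases_Dinf_Dfin with
  | inf i => exact h i le_rfl
  | fin i j hij =>
    exact (le_Dfin_iff hij).mpr ⟨h i (Dfin_le_Dinf_left hij), h j (Dfin_le_Dinf_right hij)⟩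

theorem isGLB_pair_Dfin {a b : DeltaP} (h : a.1.1 < b.1.1) (hab : ¬ a ≤ b) :
    IsGLB {a, b} (Dfin a.1.1 b.1.1 h) := by
  refine ⟨?_, fun x hx => (le_Dfin_iff h).mpr
    ⟨(hx (Set.mem_insert a {b})).trans (le_Dinf_fst a),
      (hx (Set.mem_insert_of_mem a rfl)).trans (le_Dinf_fst b)⟩⟩
  rintro x (rfl | rfl)
  · exact Or.inr ⟨rfl, (not_le.mp fun h' => hab (Or.inl h')).le⟩
  · exact Or.inl le_rfl

theorem le_or_ge_of_fst_eq {a b : DeltaP} (h : a.1.1 = b.1.1) : a ≤ b ∨ b ≤ a :=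
  (le_total a.1.2 b.1.2).imp (fun h' => Or.inr ⟨h, h'⟩) (fun h' => Or.inr ⟨h.symm, h'⟩)

theorem eq_of_forall_le_Dinf_iff {a b : DeltaP} (h : ∀ k, a ≤ Dinf k ↔ b ≤ Dinf k) :
    a = b :=
  le_antisymm (le_of_forall_le_Dinf fun k => (h k).mpr) (le_of_forall_le_Dinf fun k => (h k).mp)

theorem exists_Dfin_le_of_lt_snd {a : DeltaP} {k : ℕ} (h : (k : WithTop ℕ) < a.1.2) :
    ∃ (m : ℕ) (ha : a.1.1 < m), k < m ∧ Dfin a.1.1 m ha ≤ a := by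
  induction a using cases_Dinf_Dfin with
  | inf i =>
    exact ⟨max i k + 1, Nat.lt_succ_of_le (le_max_left i k),
      Nat.lt_succ_of_le (le_max_right i k), Dfin_le_Dinf_left _⟩
  | fin i j hij => exact ⟨j, hij, WithTop.coe_lt_coe.mp h, le_rfl⟩

theorem Dfin_lt_Dfin_of_snd_eq_fst {i j k : ℕ} (hij : i < j) (hjk : j < k) :
    Dfin i j hij < Dfin j k hjk :=
  lt_of_le_of_ne (Or.inl le_rfl) fun h => hij.ne (congrArg (fun x : DeltaP => x.1.1) h)

theorem Dfin_lt_Dfin_of_lt {i j k : ℕ} (hij : i < j) (hjk : j < k) :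
    Dfin i j hij < Dfin i k (hij.trans hjk) :=
  lt_of_le_of_ne (Or.inr ⟨rfl, WithTop.coe_le_coe.mpr hjk.le⟩) fun h =>
    hjk.ne (WithTop.coe_injective (congrArg (fun x : DeltaP => x.1.2) h))

def IsInfOfDinf {P : Type*} [SemilatticeInf P] (f : DeltaP → P) : Prop :=
  ∀ (i j : ℕ) (h : i < j), f (Dfin i j h) = f (Dinf i) ⊓ f (Dinf j)

namespace IsInfOfDinf

variable {P : Type*} [SemilatticeInf P] {f : DeltaP → P}

theorem apply_le_apply_Dinf_fst (hf : IsInfOfDinf f) (a : DeltaP) : f a ≤ f (Dinf a.1.1) := by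
  induction a using cases_Dinf_Dfin with
  | inf i => exact le_rfl
  | fin i j h => exact (hf i j h).trans_le inf_le_left

theorem inf_le_apply_of_isGLB (hf : IsInfOfDinf f) {a b c : DeltaP} (hc : IsGLB {a, b} c) :
    f a ⊓ f b ≤ f c := by
  by_cases hab : a ≤ b
  · rw [hc.unique (isLeast_pair_of_le hab).isGLB]
    exact inf_le_left
  by_cases hba : b ≤ a
  · rw [Set.pair_comm] at hc
    rw [hc.unique (isLeast_pair_of_le hba).isGLB]
    exact inf_le_right
  have hne : a.1.1 ≠ b.1.1 := fun h => (le_or_ge_of_fst_eq h).elim hab hba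
  wlog hlt : a.1.1 < b.1.1 generalizing a b
  · rw [inf_comm]
    exact this (Set.pair_comm a b ▸ hc) hba hab hne.symm (hne.lt_or_gt.resolve_left hlt)
  rw [hc.unique (isGLB_pair_Dfin hlt hab), hf]
  exact inf_le_inf (hf.apply_le_apply_Dinf_fst a) (hf.apply_le_apply_Dinf_fst b)

theorem map_isGLB_pair_iff_monotone (hf : IsInfOfDinf f) :
    (∀ a b c : DeltaP, IsGLB {a, b} c → f c = f a ⊓ f b) ↔ Monotone f :=
  ⟨monotone_of_map_isGLB_pair, fun hm _ _ _ hc =>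
    le_antisymm (le_inf (hm (hc.1 (Set.mem_insert _ _))) (hm (hc.1 (Set.mem_insert_of_mem _ rfl))))
      (hf.inf_le_apply_of_isGLB hc)⟩

theorem monotone_iff_forall_le_Dinf (hf : IsInfOfDinf f) :
    Monotone f ↔ ∀ a k, a ≤ Dinf k → f a ≤ f (Dinf k) := by
  refine ⟨fun hm a k h => hm h, fun h a b hab => ?_⟩
  induction b using cases_Dinf_Dfin with
  | inf i => exact h a i hab
  | fin i j hij =>
    rw [hf]
    exact le_inf (h a i (hab.trans (Dfin_le_Dinf_left hij)))
      (h a j (hab.trans (Dfin_le_Dinf_right hij)))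

theorem monotone_iff_forall_apply_Dfin_le_apply_Dinf (hf : IsInfOfDinf f) :
    Monotone f ↔ ∀ (i j k : ℕ) (hij : i < j), j < k → f (Dfin i j hij) ≤ f (Dinf k) := by
  refine ⟨fun hm i j k hij hjk => hm (le_Dinf_iff.mpr (Or.inl (WithTop.coe_le_coe.mpr hjk.le))),
    fun h => hf.monotone_iff_forall_le_Dinf.mpr fun a k hak => ?_⟩
  induction a using cases_Dinf_Dfin with
  | inf i =>
    obtain h' | rfl := le_Dinf_iff.mp hak
    · exact absurd (top_le_iff.mp h') WithTop.coe_ne_top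
    · exact le_rfl
  | fin i j hij =>
    obtain hjk | rfl := le_Dinf_iff.mp hak
    · obtain hjk | rfl := (WithTop.coe_le_coe.mp hjk).lt_or_eq
      · exact h i j k hij hjk
      · exact (hf i j hij).trans_le inf_le_right
    · exact hf.apply_le_apply_Dinf_fst _

theorem apply_Dfin_eq_inf_iff (hf : IsInfOfDinf f) {i j k : ℕ} (hij : i < j) (hjk : j < k) :
    f (Dfin i j hij) = f (Dfin i k (hij.trans hjk)) ⊓ f (Dfin j k hjk) ↔
      f (Dfin i j hij) ≤ f (Dinf k) := by
  rw [hf, hf, hf, ← inf_inf_distrib_right, left_eq_inf]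

theorem monotone_iff_forall_apply_Dfin_eq_inf (hf : IsInfOfDinf f) :
    Monotone f ↔ ∀ (i j k : ℕ) (hij : i < j) (hjk : j < k),
      f (Dfin i j hij) = f (Dfin i k (hij.trans hjk)) ⊓ f (Dfin j k hjk) := by
  simp only [hf.apply_Dfin_eq_inf_iff]
  exact hf.monotone_iff_forall_apply_Dfin_le_apply_Dinf

theorem not_apply_Dfin_le_apply_Dinf (hf : IsInfOfDinf f)
    (hlt : ∀ (i j k : ℕ) (hij : i < j) (hjk : j < k),
      f (Dfin i j hij) < f (Dfin j k hjk) ∧ f (Dfin i j hij) < f (Dfin i k (hij.trans hjk)))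
    {i k m : ℕ} (him : i < m) (hkm : k < m) (hki : k ≠ i) :
    ¬ f (Dfin i m him) ≤ f (Dinf k) := by
  intro hle
  obtain hki | hik := hki.lt_or_gt
  · refine (hlt k i m hki him).1.not_ge ?_
    rw [hf k i]
    exact le_inf hle (hf.apply_le_apply_Dinf_fst _)
  · refine (hlt i k m hik hkm).2.not_ge ?_
    rw [hf i k]
    exact le_inf (hf.apply_le_apply_Dinf_fst _) hle

theorem apply_le_apply_Dinf_iff (hf : IsInfOfDinf f) (hm : Monotone f)
    (hlt : ∀ (i j k : ℕ) (hij : i < j) (hjk : j < k),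
      f (Dfin i j hij) < f (Dfin j k hjk) ∧ f (Dfin i j hij) < f (Dfin i k (hij.trans hjk)))
    {a : DeltaP} {k : ℕ} : f a ≤ f (Dinf k) ↔ a ≤ Dinf k := by
  refine ⟨fun hle => ?_, fun h => hm h⟩
  by_contra hak
  obtain ⟨hsnd, hfst⟩ := not_or.mp (le_Dinf_iff.not.mp hak)
  obtain ⟨m, ham, hkm, hle'⟩ := exists_Dfin_le_of_lt_snd (not_le.mp hsnd)
  exact hf.not_apply_Dfin_le_apply_Dinf hlt ham hkm (Ne.symm hfst) ((hm hle').trans hle)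

theorem injective_iff (hf : IsInfOfDinf f) (hm : Monotone f) :
    Function.Injective f ↔ ∀ (i j k : ℕ) (hij : i < j) (hjk : j < k),
      f (Dfin i j hij) < f (Dfin j k hjk) ∧ f (Dfin i j hij) < f (Dfin i k (hij.trans hjk)) := by
  refine ⟨fun hinj i j k hij hjk => ?_, fun hlt a b hab => ?_⟩
  · have hsm := hm.strictMono_of_injective hinj
    exact ⟨hsm (Dfin_lt_Dfin_of_snd_eq_fst hij hjk), hsm (Dfin_lt_Dfin_of_lt hij hjk)⟩
  · exact eq_of_forall_le_Dinf_iff fun k => by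
      rw [← hf.apply_le_apply_Dinf_iff hm hlt, ← hf.apply_le_apply_Dinf_iff hm hlt, hab]

end IsInfOfDinf

end DeltaP

/-- for `f : Δ → P` with `f(i,j) = f(i,ω) ⊓ f(j,ω)`: meet-preserving ↔
order-preserving ↔ `f(i,j) ≤ f(k,ω)` ↔ `f(i,j) = f(i,k) ⊓ f(j,k)` (for all `i<j<k<ω`);
moreover such an `f` is injective iff `f(i,j) < f(j,k)` and `f(i,j) < f(i,k)` always. -/
theorem stmt_18 {P : Type*} [SemilatticeInf P] (f : DeltaP → P)
    (hf : ∀ (i j : ℕ) (h : i < j), f (Dfin i j h) = f (Dinf i) ⊓ f (Dinf j)) :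
    (((∀ a b c : DeltaP, IsGLB {a, b} c → f c = f a ⊓ f b) ↔ Monotone f) ∧
      (Monotone f ↔ ∀ (i j k : ℕ) (hij : i < j), j < k → f (Dfin i j hij) ≤ f (Dinf k)) ∧
      (Monotone f ↔ ∀ (i j k : ℕ) (hij : i < j) (hjk : j < k),
        f (Dfin i j hij) = f (Dfin i k (hij.trans hjk)) ⊓ f (Dfin j k hjk))) ∧
    ((∀ a b c : DeltaP, IsGLB {a, b} c → f c = f a ⊓ f b) →
      (Function.Injective f ↔ ∀ (i j k : ℕ) (hij : i < j) (hjk : j < k),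
        f (Dfin i j hij) < f (Dfin j k hjk) ∧
          f (Dfin i j hij) < f (Dfin i k (hij.trans hjk)))) := by
  replace hf : DeltaP.IsInfOfDinf f := hf
  exact ⟨⟨hf.map_isGLB_pair_iff_monotone, hf.monotone_iff_forall_apply_Dfin_le_apply_Dinf,
    hf.monotone_iff_forall_apply_Dfin_eq_inf⟩,
    fun hmp => hf.injective_iff (hf.map_isGLB_pair_iff_monotone.mp hmp)⟩
end
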